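/- arXiv:2508.05108 — 8 statements merged into one kernel-verified Lean document; each statement's English description precedes it below -/
import Mathlib

section
/- (Theorem 2, unbiased risk expression.) The classification risk equals the expectation of the symmetrized SconfConfDiff loss over an independent pair: ∫_{X×X} (1/2)·(L(x,x') + L(x',x)) d(μ⊗μ)(x,x') = R, where L(x',x) = (2π₊(π₊ − c(x',x)) + π₋ − s(x',x))·ℓ₊(x') + (2π₋(π₋ − c(x',x)) + π₊ − s(x',x))·ℓ₋(x). -/
/-!
Write `π₊ = ∫ η dμ`. The weight of `ℓ₊(x)` in `L(x, x')` is affine in `η(x')`, so integrating out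
`x'` replaces `η(x')` by `π₊`, which leaves exactly `η(x)`; symmetrically, integrating out `x` in
the weight of `ℓ₋(x')` leaves `1 - η(x')`. All integrands are bounded, so by Fubini
`E[L(x, x')] = E[η ℓ₊ + (1 - η) ℓ₋] = R`, and `E[L(x', x)]` is the same because `μ ⊗ μ` is
invariant under swapping the coordinates.
-/

open MeasureTheory

section

variable {X : Type*} [MeasurableSpace X] {μ : Measure X}

theorem integrable_of_nonneg_of_le [IsFiniteMeasure μ] {f : X → ℝ} (hf : Measurable f) {C : ℝ}
    (h0 : ∀ x, 0 ≤ f x) (hC : ∀ x, f x ≤ C) : Integrable f μ :=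
  .of_bound hf.aestronglyMeasurable C <| ae_of_all _ fun x => by
    rw [Real.norm_eq_abs, abs_of_nonneg (h0 x)]
    exact hC x

theorem integral_comp_of_affine [IsProbabilityMeasure μ] {f : X → ℝ} (hf : Integrable f μ)
    {φ : ℝ → ℝ} (hφ : ∀ t, φ t = φ 0 + (φ 1 - φ 0) * t) :
    ∫ x, φ (f x) ∂μ = φ (∫ x, f x ∂μ) := by
  rw [integral_congr_ae (ae_of_all _ fun x => hφ (f x)),
    integral_add (integrable_const _) (hf.const_mul _), integral_const, integral_const_mul,
    probReal_univ, one_smul, ← hφ]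

theorem integral_prod_symmetrize [SFinite μ] {F : X → X → ℝ}
    (hF : Integrable (fun p : X × X => F p.1 p.2) (μ.prod μ)) :
    ∫ p : X × X, 1 / 2 * (F p.1 p.2 + F p.2 p.1) ∂μ.prod μ
      = ∫ p : X × X, F p.1 p.2 ∂μ.prod μ := by
  have hF' : Integrable (fun p : X × X => F p.2 p.1) (μ.prod μ) := hF.swap
  have hswap : ∫ p : X × X, F p.2 p.1 ∂μ.prod μ = ∫ p : X × X, F p.1 p.2 ∂μ.prod μ :=
    integral_prod_swap (fun p : X × X => F p.1 p.2)
  rw [integral_const_mul, integral_add hF hF', hswap]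
  ring

theorem integral_prod_mul_fst_add_mul_snd [SFinite μ] {A B : X → X → ℝ} {f g a b : X → ℝ}
    (hA : Integrable (fun p : X × X => A p.1 p.2 * f p.1) (μ.prod μ))
    (hB : Integrable (fun p : X × X => B p.1 p.2 * g p.2) (μ.prod μ))
    (ha : ∀ x, ∫ x', A x x' ∂μ = a x) (hb : ∀ x', ∫ x, B x x' ∂μ = b x') :
    ∫ p : X × X, (A p.1 p.2 * f p.1 + B p.1 p.2 * g p.2) ∂μ.prod μ
      = ∫ x, (a x * f x + b x * g x) ∂μ := by
  have hIa : Integrable (fun x => a x * f x) μ := by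
    simpa only [integral_mul_const, ha] using hA.integral_prod_left
  have hIb : Integrable (fun x' => b x' * g x') μ := by
    simpa only [integral_mul_const, hb] using hB.integral_prod_right
  rw [integral_add hA hB, integral_prod _ hA, integral_prod_symm _ hB, integral_add hIa hIb]
  simp only [integral_mul_const, ha, hb]

end

section

variable {X : Type*}

/-- With `q = π₊` this is the weight of `ℓ₊(x)` in `L(x, x')`, with `q = π₋` that of `ℓ₋(x')`. -/
def pairWeight (η : X → ℝ) (q : ℝ) (x x' : X) : ℝ :=
  2 * q * (q - (η x' - η x)) + (1 - q) - (η x * η x' + (1 - η x) * (1 - η x'))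

theorem abs_pairWeight_le {η : X → ℝ} (hη0 : ∀ x, 0 ≤ η x) (hη1 : ∀ x, η x ≤ 1) {q : ℝ}
    (hq0 : 0 ≤ q) (hq1 : q ≤ 1) (x x' : X) : |pairWeight η q x x'| ≤ 5 := by
  rw [pairWeight, abs_le]
  constructor <;> nlinarith [hη0 x, hη1 x, hη0 x', hη1 x', mul_nonneg hq0 (hη0 x),
    mul_nonneg hq0 (hη0 x'), mul_nonneg (hη0 x) (hη0 x'),
    mul_nonneg (sub_nonneg.2 (hη1 x)) (sub_nonneg.2 (hη1 x'))]

variable [MeasurableSpace X] {μ : Measure X}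

theorem integrable_pairWeight_mul {ρ : Measure (X × X)} {η : X → ℝ} (hη : Measurable η)
    (hη0 : ∀ x, 0 ≤ η x) (hη1 : ∀ x, η x ≤ 1) {q : ℝ} (hq0 : 0 ≤ q) (hq1 : q ≤ 1)
    {f : X × X → ℝ} (hf : Integrable f ρ) :
    Integrable (fun p : X × X => pairWeight η q p.1 p.2 * f p) ρ :=
  hf.bdd_mul (by unfold pairWeight; fun_prop) <|
    ae_of_all _ fun p => (Real.norm_eq_abs _).trans_le (abs_pairWeight_le hη0 hη1 hq0 hq1 _ _)

variable [IsProbabilityMeasure μ] {η : X → ℝ}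

theorem integral_pairWeight_right (hη : Integrable η μ) (x : X) :
    ∫ x', pairWeight η (∫ y, η y ∂μ) x x' ∂μ = η x := by
  set π := ∫ y, η y ∂μ
  unfold pairWeight
  rw [integral_comp_of_affine hη
    (φ := fun t => 2 * π * (π - (t - η x)) + (1 - π) - (η x * t + (1 - η x) * (1 - t)))
    fun t => by ring]
  ring

theorem integral_pairWeight_left (hη : Integrable η μ) (x' : X) :
    ∫ x, pairWeight η (1 - ∫ y, η y ∂μ) x x' ∂μ = 1 - η x' := by
  set π := ∫ y, η y ∂μ
  unfold pairWeight
  rw [integral_comp_of_affine hη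
    (φ := fun t => 2 * (1 - π) * ((1 - π) - (η x' - t)) + (1 - (1 - π))
      - (t * η x' + (1 - t) * (1 - η x')))
    fun t => by ring]
  ring

end

theorem sconfconfdiff_unbiased_risk_expression_general
    {X : Type*} [MeasurableSpace X] (μ : Measure X) [IsProbabilityMeasure μ]
    (η : X → ℝ) (hη : Measurable η) (hη0 : ∀ x, 0 ≤ η x) (hη1 : ∀ x, η x ≤ 1)
    (πp πm : ℝ) (hπp : πp = ∫ x, η x ∂μ) (hπm : πm = 1 - πp)
    (s c : X → X → ℝ)
    (hs : ∀ x x', s x x' = η x * η x' + (1 - η x) * (1 - η x'))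
    (hc : ∀ x x', c x x' = η x' - η x)
    (Cℓ : ℝ)
    (ℓp ℓm : X → ℝ) (hℓp : Measurable ℓp) (hℓm : Measurable ℓm)
    (hℓp0 : ∀ x, 0 ≤ ℓp x) (hℓpC : ∀ x, ℓp x ≤ Cℓ)
    (hℓm0 : ∀ x, 0 ≤ ℓm x) (hℓmC : ∀ x, ℓm x ≤ Cℓ)
    (R : ℝ) (hR : R = ∫ x, (η x * ℓp x + (1 - η x) * ℓm x) ∂μ)
    (L : X → X → ℝ)
    (hL : ∀ x x', L x x' =
      (2 * πp * (πp - c x x') + πm - s x x') * ℓp x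
      + (2 * πm * (πm - c x x') + πp - s x x') * ℓm x') :
    ∫ p : X × X, (1 / 2) * (L p.1 p.2 + L p.2 p.1) ∂(μ.prod μ) = R := by
  have hIη : Integrable η μ := integrable_of_nonneg_of_le hη hη0 hη1
  have hπp0 : 0 ≤ πp := hπp ▸ integral_nonneg hη0
  have hπp1 : πp ≤ 1 := hπp ▸ (integral_mono hIη (integrable_const 1) hη1).trans_eq (by simp)
  have hLw : ∀ x x', L x x' = pairWeight η πp x x' * ℓp x + pairWeight η πm x x' * ℓm x' := by
    intro x x'
    rw [hL, hs, hc, hπm, pairWeight, pairWeight]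
    ring
  have hIp : Integrable (fun p : X × X => pairWeight η πp p.1 p.2 * ℓp p.1) (μ.prod μ) :=
    integrable_pairWeight_mul hη hη0 hη1 hπp0 hπp1
      ((integrable_of_nonneg_of_le hℓp hℓp0 hℓpC).comp_fst μ)
  have hIm : Integrable (fun p : X × X => pairWeight η πm p.1 p.2 * ℓm p.2) (μ.prod μ) :=
    integrable_pairWeight_mul hη hη0 hη1 (by linarith) (by linarith)
      ((integrable_of_nonneg_of_le hℓm hℓm0 hℓmC).comp_snd μ)
  have hIL : Integrable (fun p : X × X => L p.1 p.2) (μ.prod μ) := by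
    simp only [hLw]
    exact hIp.add hIm
  subst hπm hπp
  rw [integral_prod_symmetrize hIL, hR]
  simp only [hLw]
  exact integral_prod_mul_fst_add_mul_snd hIp hIm (integral_pairWeight_right hIη)
    (integral_pairWeight_left hIη)

/-- (Theorem 2, unbiased risk expression.) The classification risk equals the expectation
of the symmetrized SconfConfDiff loss over an independent pair. -/
theorem sconfconfdiff_unbiased_risk_expression
    {X : Type*} [MeasurableSpace X] (μ : Measure X) [IsProbabilityMeasure μ]
    (η : X → ℝ) (hη : Measurable η) (hη0 : ∀ x, 0 ≤ η x) (hη1 : ∀ x, η x ≤ 1)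
    (πp πm : ℝ) (hπp : πp = ∫ x, η x ∂μ) (hπm : πm = 1 - πp)
    (s c : X → X → ℝ)
    (hs : ∀ x x', s x x' = η x * η x' + (1 - η x) * (1 - η x'))
    (hc : ∀ x x', c x x' = η x' - η x)
    (Cℓ : ℝ) (hCℓ : 0 ≤ Cℓ)
    (ℓp ℓm : X → ℝ) (hℓp : Measurable ℓp) (hℓm : Measurable ℓm)
    (hℓp0 : ∀ x, 0 ≤ ℓp x) (hℓpC : ∀ x, ℓp x ≤ Cℓ)
    (hℓm0 : ∀ x, 0 ≤ ℓm x) (hℓmC : ∀ x, ℓm x ≤ Cℓ)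
    (R : ℝ) (hR : R = ∫ x, (η x * ℓp x + (1 - η x) * ℓm x) ∂μ)
    (L : X → X → ℝ)
    (hL : ∀ x x', L x x' =
      (2 * πp * (πp - c x x') + πm - s x x') * ℓp x
      + (2 * πm * (πm - c x x') + πp - s x x') * ℓm x') :
    ∫ p : X × X, (1 / 2) * (L p.1 p.2 + L p.2 p.1) ∂(μ.prod μ) = R :=
  sconfconfdiff_unbiased_risk_expression_general μ η hη hη0 hη1 πp πm hπp hπm s c hs hc Cℓ ℓp ℓm hℓp
    hℓm hℓp0 hℓpC hℓm0 hℓmC R hR L hL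
end

section
/- (Unbiasedness of the empirical SconfConfDiff risk estimator, Eq. (7).) The expectation over ν of the empirical risk R̂_SCD(D) = (1/(2n))·Σ_{i=1}^{n} (L(xᵢ,xᵢ') + L(xᵢ',xᵢ)) equals the classification risk R: ∫ R̂_SCD dν = R. -/
open MeasureTheory

/-!
For independent `x, x' ~ μ` the weights in `L` can be averaged one variable at a time: they are
affine in `η`, so with `∫ η dμ = π₊` and `π₊ + π₋ = 1` the weight of `ℓ₊(x)` averages over `x'` to
`η x`, and the weight of `ℓ₋(x')` averages over `x` to `1 - η x'`. By Fubini each of `L(x, x')` and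
`L(x', x)` therefore has expectation `R`, and so does the empirical mean over `n` i.i.d. pairs.
-/

noncomputable section

section Estimator

variable {X : Type*}

def simConf (η : X → ℝ) (x x' : X) : ℝ := η x * η x' + (1 - η x) * (1 - η x')

def confDiff (η : X → ℝ) (x x' : X) : ℝ := η x' - η x

def sconfConfDiffWeight (η : X → ℝ) (π π' : ℝ) (x x' : X) : ℝ :=
  2 * π * (π - confDiff η x x') + π' - simConf η x x'

def sconfConfDiffLoss (η ℓp ℓm : X → ℝ) (πp πm : ℝ) (x x' : X) : ℝ :=
  sconfConfDiffWeight η πp πm x x' * ℓp x + sconfConfDiffWeight η πm πp x x' * ℓm x'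

theorem abs_sconfConfDiffWeight_le {η : X → ℝ} {π π' : ℝ} (hη : ∀ x, η x ∈ Set.Icc (0 : ℝ) 1)
    (hπ : π ∈ Set.Icc (0 : ℝ) 1) (hπ' : π' ∈ Set.Icc (0 : ℝ) 1) (x x' : X) :
    |sconfConfDiffWeight η π π' x x'| ≤ 5 := by
  obtain ⟨h0, h1⟩ := hη x
  obtain ⟨h0', h1'⟩ := hη x'
  simp only [sconfConfDiffWeight, confDiff, simConf]
  rw [abs_le]
  constructor <;> nlinarith [hπ.1, hπ.2, hπ'.1, hπ'.2, mul_nonneg h0 h0', mul_nonneg hπ.1 h0,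
    mul_nonneg hπ.1 h0', mul_nonneg (sub_nonneg.2 h1) (sub_nonneg.2 h1'),
    mul_nonneg hπ.1 (sub_nonneg.2 h1), mul_nonneg hπ.1 (sub_nonneg.2 h1')]

end Estimator

section Integrals

variable {X Y : Type*} [MeasurableSpace X] [MeasurableSpace Y]

theorem integrable_of_abs_le {μ : Measure X} [IsFiniteMeasure μ] {f : X → ℝ} (hf : Measurable f)
    {C : ℝ} (hC : ∀ x, |f x| ≤ C) : Integrable f μ :=
  .of_bound hf.aestronglyMeasurable C (ae_of_all _ hC)

theorem integral_const_add_mul {μ : Measure X} [IsProbabilityMeasure μ] {f : X → ℝ}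
    (hf : Integrable f μ) (a b : ℝ) : ∫ x, (a + b * f x) ∂μ = a + b * ∫ x, f x ∂μ := by
  rw [integral_add (integrable_const a) (hf.const_mul b), integral_const_mul]
  simp

theorem integrable_of_mem_Icc {μ : Measure X} [IsFiniteMeasure μ] {f : X → ℝ}
    (hf : Measurable f) {a b : ℝ} (h : ∀ x, f x ∈ Set.Icc a b) : Integrable f μ :=
  integrable_of_abs_le hf fun x => abs_le_max_abs_abs (h x).1 (h x).2

theorem integral_mem_Icc_of_mem_Icc {μ : Measure X} [IsProbabilityMeasure μ] {f : X → ℝ}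
    (hf : Measurable f) {a b : ℝ} (h : ∀ x, f x ∈ Set.Icc a b) : ∫ x, f x ∂μ ∈ Set.Icc a b := by
  have hfi : Integrable f μ := integrable_of_mem_Icc hf h
  constructor
  · simpa using integral_mono (integrable_const a) hfi fun x => (h x).1
  · simpa using integral_mono hfi (integrable_const b) fun x => (h x).2

variable {μ : Measure X} {ν : Measure Y} [SFinite μ] [SFinite ν]

theorem integral_prod_mul_fst_eq {K : X → Y → ℝ} {g k : X → ℝ}
    (hint : Integrable (fun z : X × Y => K z.1 z.2 * g z.1) (μ.prod ν))
    (hK : ∀ x, ∫ y, K x y ∂ν = k x) :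
    ∫ z, K z.1 z.2 * g z.1 ∂(μ.prod ν) = ∫ x, k x * g x ∂μ := by
  rw [integral_prod _ hint]
  simp only [integral_mul_const, hK]

theorem integral_prod_mul_snd_eq {K : X → Y → ℝ} {g k : Y → ℝ}
    (hint : Integrable (fun z : X × Y => K z.1 z.2 * g z.2) (μ.prod ν))
    (hK : ∀ y, ∫ x, K x y ∂μ = k y) :
    ∫ z, K z.1 z.2 * g z.2 ∂(μ.prod ν) = ∫ y, k y * g y ∂ν := by
  rw [integral_prod_symm _ hint]
  simp only [integral_mul_const, hK]

end Integrals

theorem integral_sum_comp_eval {ι Z : Type*} [Fintype ι] [MeasurableSpace Z] {ρ : Measure Z}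
    [IsProbabilityMeasure ρ] {F : Z → ℝ} (hF : Integrable F ρ) :
    ∫ D, ∑ i, F (D i) ∂(Measure.pi fun _ : ι => ρ) = Fintype.card ι * ∫ z, F z ∂ρ := by
  have h (i : ι) : ∫ D, F (D i) ∂(Measure.pi fun _ : ι => ρ) = ∫ z, F z ∂ρ :=
    integral_comp_eval hF.aestronglyMeasurable
  rw [integral_finsetSum _ fun i _ => integrable_comp_eval hF]
  simp [h]

section Unbiased

variable {X : Type*} [MeasurableSpace X] {μ : Measure X} [IsProbabilityMeasure μ]
  {η ℓp ℓm : X → ℝ} {πp πm : ℝ}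

theorem integral_sconfConfDiffWeight_snd (hη : Integrable η μ) (hπ : ∫ x, η x ∂μ = πp)
    (hπpm : πp + πm = 1) (x : X) : ∫ x', sconfConfDiffWeight η πp πm x x' ∂μ = η x := by
  have h : ∀ x', sconfConfDiffWeight η πp πm x x'
      = (2 * πp ^ 2 + 2 * πp * η x + πm - (1 - η x)) + (1 - 2 * πp - 2 * η x) * η x' := by
    intro x'
    simp only [sconfConfDiffWeight, confDiff, simConf]
    ring
  simp only [h, integral_const_add_mul hη, hπ]
  linear_combination hπpm

theorem integral_sconfConfDiffWeight_fst (hη : Integrable η μ) (hπ : ∫ x, η x ∂μ = πp)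
    (hπpm : πp + πm = 1) (x' : X) : ∫ x, sconfConfDiffWeight η πm πp x x' ∂μ = 1 - η x' := by
  have h : ∀ x, sconfConfDiffWeight η πm πp x x'
      = (2 * πm * (πm - η x') + πp - (1 - η x')) + (2 * πm + 1 - 2 * η x') * η x := by
    intro x
    simp only [sconfConfDiffWeight, confDiff, simConf]
    ring
  simp only [h, integral_const_add_mul hη, hπ]
  linear_combination (2 * πm + 2 - 2 * η x') * hπpm

theorem integrable_sconfConfDiffWeight_mul (hη : Measurable η)
    (hη01 : ∀ x, η x ∈ Set.Icc (0 : ℝ) 1) {π π' : ℝ} (hπ : π ∈ Set.Icc (0 : ℝ) 1)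
    (hπ' : π' ∈ Set.Icc (0 : ℝ) 1) {g : X × X → ℝ} (hg : Measurable g) {C : ℝ}
    (hgC : ∀ z, |g z| ≤ C) :
    Integrable (fun z : X × X => sconfConfDiffWeight η π π' z.1 z.2 * g z) (μ.prod μ) := by
  refine integrable_of_abs_le (C := 5 * C) ?_ fun z => ?_
  · simp only [sconfConfDiffWeight, confDiff, simConf]
    fun_prop
  · rw [abs_mul]
    exact mul_le_mul (abs_sconfConfDiffWeight_le hη01 hπ hπ' z.1 z.2) (hgC z) (abs_nonneg _)
      (by norm_num)

theorem integrable_sconfConfDiffLoss_terms (hη : Measurable η)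
    (hη01 : ∀ x, η x ∈ Set.Icc (0 : ℝ) 1) (hπ : ∫ x, η x ∂μ = πp) (hπpm : πp + πm = 1)
    (hℓp : Measurable ℓp) (hℓm : Measurable ℓm) {C : ℝ} (hℓpC : ∀ x, |ℓp x| ≤ C)
    (hℓmC : ∀ x, |ℓm x| ≤ C) :
    Integrable (fun z : X × X => sconfConfDiffWeight η πp πm z.1 z.2 * ℓp z.1) (μ.prod μ) ∧
      Integrable (fun z : X × X => sconfConfDiffWeight η πm πp z.1 z.2 * ℓm z.2) (μ.prod μ) := by
  have hπp : πp ∈ Set.Icc (0 : ℝ) 1 := hπ ▸ integral_mem_Icc_of_mem_Icc hη hη01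
  have hπm : πm ∈ Set.Icc (0 : ℝ) 1 := ⟨by linarith [hπp.2], by linarith [hπp.1]⟩
  exact ⟨integrable_sconfConfDiffWeight_mul hη hη01 hπp hπm (hℓp.comp measurable_fst)
      fun z => hℓpC z.1,
    integrable_sconfConfDiffWeight_mul hη hη01 hπm hπp (hℓm.comp measurable_snd)
      fun z => hℓmC z.2⟩

theorem integral_sconfConfDiffLoss (hη : Measurable η) (hη01 : ∀ x, η x ∈ Set.Icc (0 : ℝ) 1)
    (hπ : ∫ x, η x ∂μ = πp) (hπpm : πp + πm = 1) (hℓp : Measurable ℓp) (hℓm : Measurable ℓm)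
    {C : ℝ} (hℓpC : ∀ x, |ℓp x| ≤ C) (hℓmC : ∀ x, |ℓm x| ≤ C) :
    ∫ z, sconfConfDiffLoss η ℓp ℓm πp πm z.1 z.2 ∂(μ.prod μ)
      = ∫ x, (η x * ℓp x + (1 - η x) * ℓm x) ∂μ := by
  have hηi : Integrable η μ := integrable_of_mem_Icc hη hη01
  obtain ⟨hp, hm⟩ := integrable_sconfConfDiffLoss_terms hη hη01 hπ hπpm hℓp hℓm hℓpC hℓmC
  have hη1 : ∀ x, ‖η x‖ ≤ 1 := fun x => abs_le.2 ⟨by linarith [(hη01 x).1], (hη01 x).2⟩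
  have hη1' : ∀ x, ‖1 - η x‖ ≤ 1 :=
    fun x => abs_le.2 ⟨by linarith [(hη01 x).2], by linarith [(hη01 x).1]⟩
  have hηℓp : Integrable (fun x => η x * ℓp x) μ :=
    (integrable_of_abs_le hℓp hℓpC).bdd_mul hη.aestronglyMeasurable (ae_of_all _ hη1)
  have hηℓm : Integrable (fun x => (1 - η x) * ℓm x) μ :=
    (integrable_of_abs_le hℓm hℓmC).bdd_mul (measurable_const.sub hη).aestronglyMeasurable
      (ae_of_all _ hη1')
  calc ∫ z, sconfConfDiffLoss η ℓp ℓm πp πm z.1 z.2 ∂(μ.prod μ)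
      = ∫ z, sconfConfDiffWeight η πp πm z.1 z.2 * ℓp z.1 ∂(μ.prod μ)
        + ∫ z, sconfConfDiffWeight η πm πp z.1 z.2 * ℓm z.2 ∂(μ.prod μ) := integral_add hp hm
    _ = ∫ x, η x * ℓp x ∂μ + ∫ x, (1 - η x) * ℓm x ∂μ := by
      rw [integral_prod_mul_fst_eq hp (integral_sconfConfDiffWeight_snd hηi hπ hπpm),
        integral_prod_mul_snd_eq hm (integral_sconfConfDiffWeight_fst hηi hπ hπpm)]
    _ = ∫ x, (η x * ℓp x + (1 - η x) * ℓm x) ∂μ := (integral_add hηℓp hηℓm).symm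

theorem integrable_sconfConfDiffLoss (hη : Measurable η) (hη01 : ∀ x, η x ∈ Set.Icc (0 : ℝ) 1)
    (hπ : ∫ x, η x ∂μ = πp) (hπpm : πp + πm = 1) (hℓp : Measurable ℓp) (hℓm : Measurable ℓm)
    {C : ℝ} (hℓpC : ∀ x, |ℓp x| ≤ C) (hℓmC : ∀ x, |ℓm x| ≤ C) :
    Integrable (fun z : X × X => sconfConfDiffLoss η ℓp ℓm πp πm z.1 z.2) (μ.prod μ) :=
  let ⟨hp, hm⟩ := integrable_sconfConfDiffLoss_terms hη hη01 hπ hπpm hℓp hℓm hℓpC hℓmC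
  hp.add hm

theorem integral_sconfConfDiffLoss_add_swap (hη : Measurable η)
    (hη01 : ∀ x, η x ∈ Set.Icc (0 : ℝ) 1)
    (hπ : ∫ x, η x ∂μ = πp) (hπpm : πp + πm = 1) (hℓp : Measurable ℓp) (hℓm : Measurable ℓm)
    {C : ℝ} (hℓpC : ∀ x, |ℓp x| ≤ C) (hℓmC : ∀ x, |ℓm x| ≤ C) :
    ∫ z, (sconfConfDiffLoss η ℓp ℓm πp πm z.1 z.2 + sconfConfDiffLoss η ℓp ℓm πp πm z.2 z.1)
        ∂(μ.prod μ) = 2 * ∫ x, (η x * ℓp x + (1 - η x) * ℓm x) ∂μ := by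
  have hloss := integrable_sconfConfDiffLoss (μ := μ) hη hη01 hπ hπpm hℓp hℓm hℓpC hℓmC
  have hswap :
      Integrable (fun z : X × X => sconfConfDiffLoss η ℓp ℓm πp πm z.2 z.1) (μ.prod μ) :=
    hloss.swap
  have hswap_eq : ∫ z, sconfConfDiffLoss η ℓp ℓm πp πm z.2 z.1 ∂(μ.prod μ)
      = ∫ z, sconfConfDiffLoss η ℓp ℓm πp πm z.1 z.2 ∂(μ.prod μ) :=
    integral_prod_swap (fun z => sconfConfDiffLoss η ℓp ℓm πp πm z.1 z.2)
  rw [integral_add hloss hswap, hswap_eq,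
    integral_sconfConfDiffLoss hη hη01 hπ hπpm hℓp hℓm hℓpC hℓmC]
  ring

end Unbiased

theorem sconfconfdiff_empirical_risk_unbiased_general
    {X : Type*} [MeasurableSpace X] (μ : Measure X) [IsProbabilityMeasure μ]
    (η : X → ℝ) (hη : Measurable η) (hη0 : ∀ x, 0 ≤ η x) (hη1 : ∀ x, η x ≤ 1)
    (πp πm : ℝ) (hπp : πp = ∫ x, η x ∂μ) (hπm : πm = 1 - πp)
    (s c : X → X → ℝ)
    (hs : ∀ x x', s x x' = η x * η x' + (1 - η x) * (1 - η x'))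
    (hc : ∀ x x', c x x' = η x' - η x)
    (Cℓ : ℝ)
    (ℓp ℓm : X → ℝ) (hℓp : Measurable ℓp) (hℓm : Measurable ℓm)
    (hℓp0 : ∀ x, 0 ≤ ℓp x) (hℓpC : ∀ x, ℓp x ≤ Cℓ)
    (hℓm0 : ∀ x, 0 ≤ ℓm x) (hℓmC : ∀ x, ℓm x ≤ Cℓ)
    (R : ℝ) (hR : R = ∫ x, (η x * ℓp x + (1 - η x) * ℓm x) ∂μ)
    (L : X → X → ℝ)
    (hL : ∀ x x', L x x' =
      (2 * πp * (πp - c x x') + πm - s x x') * ℓp x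
      + (2 * πm * (πm - c x x') + πp - s x x') * ℓm x')
    (n : ℕ) (hn : 1 ≤ n)
    (ν : Measure (Fin n → X × X)) (hν : ν = Measure.pi fun _ => μ.prod μ) :
    ∫ D, (1 / (2 * (n : ℝ))) * ∑ i, (L (D i).1 (D i).2 + L (D i).2 (D i).1) ∂ν = R := by
  obtain rfl : s = simConf η := funext₂ hs
  obtain rfl : c = confDiff η := funext₂ hc
  obtain rfl : L = sconfConfDiffLoss η ℓp ℓm πp πm := funext₂ hL
  subst hν hR
  have hη01 : ∀ x, η x ∈ Set.Icc (0 : ℝ) 1 := fun x => ⟨hη0 x, hη1 x⟩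
  have hπpm : πp + πm = 1 := by linarith
  have hℓpC' : ∀ x, |ℓp x| ≤ Cℓ := fun x => abs_le.2 ⟨by linarith [hℓp0 x, hℓpC x], hℓpC x⟩
  have hℓmC' : ∀ x, |ℓm x| ≤ Cℓ := fun x => abs_le.2 ⟨by linarith [hℓm0 x, hℓmC x], hℓmC x⟩
  have hloss :=
    integrable_sconfConfDiffLoss (μ := μ) hη hη01 hπp.symm hπpm hℓp hℓm hℓpC' hℓmC'
  have hpair : Integrable (fun z : X × X => sconfConfDiffLoss η ℓp ℓm πp πm z.1 z.2
      + sconfConfDiffLoss η ℓp ℓm πp πm z.2 z.1) (μ.prod μ) := hloss.add hloss.swap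
  rw [integral_const_mul, integral_sum_comp_eval hpair,
    integral_sconfConfDiffLoss_add_swap hη hη01 hπp.symm hπpm hℓp hℓm hℓpC' hℓmC',
    Fintype.card_fin]
  have hn' : (n : ℝ) ≠ 0 := Nat.cast_ne_zero.2 (by omega)
  field_simp

/-- (Unbiasedness of the empirical SconfConfDiff risk estimator, Eq. (7).)
The expectation over ν of the empirical risk equals the classification risk R. -/
theorem sconfconfdiff_empirical_risk_unbiased
    {X : Type*} [MeasurableSpace X] (μ : Measure X) [IsProbabilityMeasure μ]
    (η : X → ℝ) (hη : Measurable η) (hη0 : ∀ x, 0 ≤ η x) (hη1 : ∀ x, η x ≤ 1)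
    (πp πm : ℝ) (hπp : πp = ∫ x, η x ∂μ) (hπm : πm = 1 - πp)
    (s c : X → X → ℝ)
    (hs : ∀ x x', s x x' = η x * η x' + (1 - η x) * (1 - η x'))
    (hc : ∀ x x', c x x' = η x' - η x)
    (Cℓ : ℝ) (hCℓ : 0 ≤ Cℓ)
    (ℓp ℓm : X → ℝ) (hℓp : Measurable ℓp) (hℓm : Measurable ℓm)
    (hℓp0 : ∀ x, 0 ≤ ℓp x) (hℓpC : ∀ x, ℓp x ≤ Cℓ)
    (hℓm0 : ∀ x, 0 ≤ ℓm x) (hℓmC : ∀ x, ℓm x ≤ Cℓ)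
    (R : ℝ) (hR : R = ∫ x, (η x * ℓp x + (1 - η x) * ℓm x) ∂μ)
    (L : X → X → ℝ)
    (hL : ∀ x x', L x x' =
      (2 * πp * (πp - c x x') + πm - s x x') * ℓp x
      + (2 * πm * (πm - c x x') + πp - s x x') * ℓm x')
    (n : ℕ) (hn : 1 ≤ n)
    (ν : Measure (Fin n → X × X)) (hν : ν = Measure.pi fun _ => μ.prod μ) :
    ∫ D, (1 / (2 * (n : ℝ))) * ∑ i, (L (D i).1 (D i).2 + L (D i).2 (D i).1) ∂ν = R :=
  sconfconfdiff_empirical_risk_unbiased_general μ η hη hη0 hη1 πp πm hπp hπm s c hs hc Cℓ ℓp ℓm hℓp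
    hℓm hℓp0 hℓpC hℓm0 hℓmC R hR L hL n hn ν hν
end
end

section
/- (Lemma 1, λ-weighted unbiased risk estimators.) For every λ ∈ [0,1], the λ-weighted estimator Ŝ_λ(D) = (1/n)·Σ_{i=1}^{n} (λ·L(xᵢ,xᵢ') + (1−λ)·L(xᵢ',xᵢ)) satisfies ∫ Ŝ_λ dν = R; i.e., every such λ-weighted estimator is an unbiased estimator of the classification risk. -/
/-!
Integrating `x'` out of the coefficient of `ℓ₊(x)` in `L(x, x')` leaves `η(x)`: the coefficient is
affine in `η(x')` and `π₊ = E η`. Flipping the posterior to `1 - η` and reversing the pair turns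
the coefficient of `ℓ₋(x')` into that of `ℓ₊`, so integrating `x` out of it leaves `1 - η(x')`.
Hence `E L(x, x') = R`, also `E L(x', x) = R` because `μ ⊗ μ` is swap-invariant, and averaging
the `λ`-mixture over `n` i.i.d. pairs keeps the expectation `R`.
-/

open MeasureTheory Set

theorem Measurable.integrable_of_forall_mem_Icc {α : Type*} [MeasurableSpace α] {μ : Measure α}
    [IsFiniteMeasure μ] {f : α → ℝ} {a b : ℝ} (hf : Measurable f) (hab : ∀ x, f x ∈ Icc a b) :
    Integrable f μ :=
  .of_bound hf.aestronglyMeasurable (|a| + |b|) <| ae_of_all _ fun x => by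
    rw [Real.norm_eq_abs, abs_le]
    constructor <;> linarith [(hab x).1, (hab x).2, neg_abs_le a, le_abs_self b, abs_nonneg a,
      abs_nonneg b]

section ProbabilityMeasure

variable {α : Type*} [MeasurableSpace α] {μ : Measure α} [IsProbabilityMeasure μ]

theorem integral_mem_Icc_of_forall_mem_Icc {f : α → ℝ} {a b : ℝ} (hf : Integrable f μ)
    (hab : ∀ x, f x ∈ Icc a b) : ∫ x, f x ∂μ ∈ Icc a b :=
  ⟨by simpa using integral_mono (integrable_const a) hf fun x => (hab x).1,
    by simpa using integral_mono hf (integrable_const b) fun x => (hab x).2⟩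

theorem integral_empiricalMean_pi {f : α → ℝ} (hf : Integrable f μ) {n : ℕ} (hn : n ≠ 0) :
    ∫ D, (1 / (n : ℝ)) * ∑ i, f (D i) ∂(Measure.pi fun _ : Fin n => μ) = ∫ x, f x ∂μ := by
  have h_each (i : Fin n) : ∫ D, f (D i) ∂(Measure.pi fun _ : Fin n => μ) = ∫ x, f x ∂μ :=
    integral_comp_eval hf.aestronglyMeasurable
  rw [integral_const_mul, integral_finsetSum _ fun i _ => integrable_comp_eval hf]
  simp only [h_each, Finset.sum_const, Finset.card_univ, Fintype.card_fin, nsmul_eq_mul]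
  field_simp

theorem integral_weighted_swap_prod_self {F : α × α → ℝ} (hF : Integrable F (μ.prod μ))
    (lam : ℝ) :
    ∫ p, (lam * F p + (1 - lam) * F p.swap) ∂(μ.prod μ) = ∫ p, F p ∂(μ.prod μ) := by
  have hF_swap : Integrable (fun p => F p.swap) (μ.prod μ) := hF.swap
  have h_swap : ∫ p, F p.swap ∂(μ.prod μ) = ∫ p, F p ∂(μ.prod μ) := integral_prod_swap F
  rw [integral_add (hF.const_mul lam) (hF_swap.const_mul (1 - lam)), integral_const_mul,
    integral_const_mul, h_swap]
  ring

end ProbabilityMeasure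

section PairLoss

variable {X : Type*} {η ℓ : X → ℝ}

/-- `posWeight` and `negWeight` are the coefficients of `ℓ₊(x)` and `ℓ₋(x')` in `L(x, x')`,
with `s`, `c` and `π₋ = 1 - π` written out. -/
def posWeight (η : X → ℝ) (π : ℝ) (x x' : X) : ℝ :=
  2 * π * (π - (η x' - η x)) + (1 - π) - (η x * η x' + (1 - η x) * (1 - η x'))

def negWeight (η : X → ℝ) (π : ℝ) (x x' : X) : ℝ :=
  2 * (1 - π) * ((1 - π) - (η x' - η x)) + π - (η x * η x' + (1 - η x) * (1 - η x'))

def pairLoss (η ℓp ℓm : X → ℝ) (π : ℝ) (x x' : X) : ℝ :=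
  posWeight η π x x' * ℓp x + negWeight η π x x' * ℓm x'

theorem negWeight_eq_posWeight_one_sub (π : ℝ) (x x' : X) :
    negWeight η π x x' = posWeight (fun y => 1 - η y) (1 - π) x' x := by
  unfold negWeight posWeight
  ring

theorem abs_posWeight_le (hη : ∀ x, η x ∈ Icc 0 1) {π : ℝ} (hπ : π ∈ Icc 0 1) (x x' : X) :
    |posWeight η π x x'| ≤ 5 := by
  obtain ⟨h0, h1⟩ := hη x
  obtain ⟨h0', h1'⟩ := hη x'
  obtain ⟨hπ0, hπ1⟩ := hπ
  unfold posWeight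
  rw [abs_le]
  constructor <;> nlinarith [mul_nonneg h0 h0', mul_nonneg (sub_nonneg.2 h1) (sub_nonneg.2 h1'),
    mul_nonneg hπ0 (sub_nonneg.2 hπ1)]

theorem abs_negWeight_le (hη : ∀ x, η x ∈ Icc 0 1) {π : ℝ} (hπ : π ∈ Icc 0 1) (x x' : X) :
    |negWeight η π x x'| ≤ 5 := by
  rw [negWeight_eq_posWeight_one_sub]
  exact abs_posWeight_le (fun y => Icc.one_sub_mem (hη y)) (Icc.one_sub_mem hπ) x' x

variable [MeasurableSpace X] {μ : Measure X} [IsProbabilityMeasure μ]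

theorem integral_posWeight_right (hη : Integrable η μ) (x : X) :
    ∫ x', posWeight η (∫ y, η y ∂μ) x x' ∂μ = η x := by
  set π := ∫ y, η y ∂μ
  have h_affine : (fun x' => posWeight η π x x') =
      fun x' => (2 * π ^ 2 + 2 * π * η x - π + η x) + (1 - 2 * π - 2 * η x) * η x' := by
    funext x'
    unfold posWeight
    ring
  rw [h_affine, integral_add (integrable_const _) (hη.const_mul _), integral_const,
    integral_const_mul, probReal_univ, one_smul]
  ring

theorem integrable_posWeight_mul_left (hη : Measurable η) (hη01 : ∀ x, η x ∈ Icc 0 1) {π : ℝ}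
    (hπ : π ∈ Icc 0 1) (hℓ : Integrable ℓ μ) :
    Integrable (fun p : X × X => posWeight η π p.1 p.2 * ℓ p.1) (μ.prod μ) :=
  (hℓ.comp_fst μ).bdd_mul (by unfold posWeight; fun_prop) <|
    ae_of_all _ fun p => abs_posWeight_le hη01 hπ p.1 p.2

theorem integrable_negWeight_mul_right (hη : Measurable η) (hη01 : ∀ x, η x ∈ Icc 0 1) {π : ℝ}
    (hπ : π ∈ Icc 0 1) (hℓ : Integrable ℓ μ) :
    Integrable (fun p : X × X => negWeight η π p.1 p.2 * ℓ p.2) (μ.prod μ) :=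
  (hℓ.comp_snd μ).bdd_mul (by unfold negWeight; fun_prop) <|
    ae_of_all _ fun p => abs_negWeight_le hη01 hπ p.1 p.2

theorem integral_posWeight_mul_left (hη : Measurable η) (hη01 : ∀ x, η x ∈ Icc 0 1)
    (hℓ : Integrable ℓ μ) :
    ∫ p, posWeight η (∫ y, η y ∂μ) p.1 p.2 * ℓ p.1 ∂(μ.prod μ) = ∫ x, η x * ℓ x ∂μ := by
  have hη_int : Integrable η μ := hη.integrable_of_forall_mem_Icc hη01
  rw [integral_prod _ (integrable_posWeight_mul_left hη hη01
    (integral_mem_Icc_of_forall_mem_Icc hη_int hη01) hℓ)]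
  simp only [integral_mul_const, integral_posWeight_right hη_int]

theorem integral_negWeight_mul_right (hη : Measurable η) (hη01 : ∀ x, η x ∈ Icc 0 1)
    (hℓ : Integrable ℓ μ) :
    ∫ p, negWeight η (∫ y, η y ∂μ) p.1 p.2 * ℓ p.2 ∂(μ.prod μ) = ∫ x, (1 - η x) * ℓ x ∂μ := by
  have h_compl : 1 - ∫ y, η y ∂μ = ∫ y, (1 - η y) ∂μ := by
    rw [integral_sub (integrable_const 1) (hη.integrable_of_forall_mem_Icc hη01), integral_const,
      probReal_univ, one_smul]
  simp only [negWeight_eq_posWeight_one_sub, h_compl]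
  rw [← integral_posWeight_mul_left (hη.const_sub 1)
    (fun y => Icc.one_sub_mem (hη01 y)) hℓ]
  exact integral_prod_swap (fun p : X × X => posWeight (fun y => 1 - η y)
    (∫ y, (1 - η y) ∂μ) p.1 p.2 * ℓ p.1)

variable {ℓp ℓm : X → ℝ}

theorem integrable_pairLoss (hη : Measurable η) (hη01 : ∀ x, η x ∈ Icc 0 1)
    (hℓp : Integrable ℓp μ) (hℓm : Integrable ℓm μ) :
    Integrable (fun p : X × X => pairLoss η ℓp ℓm (∫ y, η y ∂μ) p.1 p.2) (μ.prod μ) :=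
  have hπ := integral_mem_Icc_of_forall_mem_Icc (hη.integrable_of_forall_mem_Icc hη01) hη01
  (integrable_posWeight_mul_left hη hη01 hπ hℓp).add
    (integrable_negWeight_mul_right hη hη01 hπ hℓm)

theorem integral_pairLoss (hη : Measurable η) (hη01 : ∀ x, η x ∈ Icc 0 1)
    (hℓp : Integrable ℓp μ) (hℓm : Integrable ℓm μ) :
    ∫ p, pairLoss η ℓp ℓm (∫ y, η y ∂μ) p.1 p.2 ∂(μ.prod μ) =
      ∫ x, (η x * ℓp x + (1 - η x) * ℓm x) ∂μ := by
  have hπ :=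
    integral_mem_Icc_of_forall_mem_Icc (μ := μ) (hη.integrable_of_forall_mem_Icc hη01) hη01
  have h_norm_le_one (t : ℝ) (ht : t ∈ Icc 0 1) : ‖t‖ ≤ 1 :=
    (Real.norm_of_nonneg ht.1).trans_le ht.2
  have hηℓp : Integrable (fun x => η x * ℓp x) μ :=
    hℓp.bdd_mul hη.aestronglyMeasurable (ae_of_all _ fun x => h_norm_le_one _ (hη01 x))
  have hηℓm : Integrable (fun x => (1 - η x) * ℓm x) μ :=
    hℓm.bdd_mul (hη.const_sub 1).aestronglyMeasurable
      (ae_of_all _ fun x => h_norm_le_one _ (Icc.one_sub_mem (hη01 x)))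
  unfold pairLoss
  rw [integral_add (integrable_posWeight_mul_left hη hη01 hπ hℓp)
      (integrable_negWeight_mul_right hη hη01 hπ hℓm),
    integral_posWeight_mul_left hη hη01 hℓp, integral_negWeight_mul_right hη hη01 hℓm,
    integral_add hηℓp hηℓm]

end PairLoss

theorem sconfconfdiff_lambda_weighted_unbiased_general
    {X : Type*} [MeasurableSpace X] (μ : Measure X) [IsProbabilityMeasure μ]
    (η : X → ℝ) (hη : Measurable η) (hη0 : ∀ x, 0 ≤ η x) (hη1 : ∀ x, η x ≤ 1)
    (πp πm : ℝ) (hπp : πp = ∫ x, η x ∂μ) (hπm : πm = 1 - πp)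
    (s c : X → X → ℝ)
    (hs : ∀ x x', s x x' = η x * η x' + (1 - η x) * (1 - η x'))
    (hc : ∀ x x', c x x' = η x' - η x)
    (Cℓ : ℝ)
    (ℓp ℓm : X → ℝ) (hℓp : Measurable ℓp) (hℓm : Measurable ℓm)
    (hℓp0 : ∀ x, 0 ≤ ℓp x) (hℓpC : ∀ x, ℓp x ≤ Cℓ)
    (hℓm0 : ∀ x, 0 ≤ ℓm x) (hℓmC : ∀ x, ℓm x ≤ Cℓ)
    (R : ℝ) (hR : R = ∫ x, (η x * ℓp x + (1 - η x) * ℓm x) ∂μ)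
    (L : X → X → ℝ)
    (hL : ∀ x x', L x x' =
      (2 * πp * (πp - c x x') + πm - s x x') * ℓp x
      + (2 * πm * (πm - c x x') + πp - s x x') * ℓm x')
    (n : ℕ) (hn : 1 ≤ n)
    (ν : Measure (Fin n → X × X)) (hν : ν = Measure.pi fun _ => μ.prod μ) :
    ∀ lam ∈ Set.Icc (0 : ℝ) 1,
      ∫ D, (1 / (n : ℝ)) *
        ∑ i, (lam * L (D i).1 (D i).2 + (1 - lam) * L (D i).2 (D i).1) ∂ν = R := by
  rintro lam -
  have hη01 : ∀ x, η x ∈ Icc 0 1 := fun x => ⟨hη0 x, hη1 x⟩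
  have hℓp_int : Integrable ℓp μ := hℓp.integrable_of_forall_mem_Icc fun x => ⟨hℓp0 x, hℓpC x⟩
  have hℓm_int : Integrable ℓm μ := hℓm.integrable_of_forall_mem_Icc fun x => ⟨hℓm0 x, hℓmC x⟩
  have hL_eq : L = pairLoss η ℓp ℓm πp := by
    funext x x'
    rw [hL, hs, hc, hπm]
    rfl
  subst hL_eq hπp hR hν
  set F : X × X → ℝ := fun p => pairLoss η ℓp ℓm (∫ x, η x ∂μ) p.1 p.2
  have hF : Integrable F (μ.prod μ) := integrable_pairLoss hη hη01 hℓp_int hℓm_int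
  calc _ = ∫ p, (lam * F p + (1 - lam) * F p.swap) ∂(μ.prod μ) :=
        integral_empiricalMean_pi ((hF.const_mul lam).add (hF.swap.const_mul (1 - lam)))
          (by omega)
    _ = ∫ p, F p ∂(μ.prod μ) := integral_weighted_swap_prod_self hF lam
    _ = _ := integral_pairLoss hη hη01 hℓp_int hℓm_int

/-- (Lemma 1, λ-weighted unbiased risk estimators.) Every λ-weighted estimator,
λ ∈ [0,1], is an unbiased estimator of the classification risk. -/
theorem sconfconfdiff_lambda_weighted_unbiased
    {X : Type*} [MeasurableSpace X] (μ : Measure X) [IsProbabilityMeasure μ]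
    (η : X → ℝ) (hη : Measurable η) (hη0 : ∀ x, 0 ≤ η x) (hη1 : ∀ x, η x ≤ 1)
    (πp πm : ℝ) (hπp : πp = ∫ x, η x ∂μ) (hπm : πm = 1 - πp)
    (s c : X → X → ℝ)
    (hs : ∀ x x', s x x' = η x * η x' + (1 - η x) * (1 - η x'))
    (hc : ∀ x x', c x x' = η x' - η x)
    (Cℓ : ℝ) (hCℓ : 0 ≤ Cℓ)
    (ℓp ℓm : X → ℝ) (hℓp : Measurable ℓp) (hℓm : Measurable ℓm)
    (hℓp0 : ∀ x, 0 ≤ ℓp x) (hℓpC : ∀ x, ℓp x ≤ Cℓ)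
    (hℓm0 : ∀ x, 0 ≤ ℓm x) (hℓmC : ∀ x, ℓm x ≤ Cℓ)
    (R : ℝ) (hR : R = ∫ x, (η x * ℓp x + (1 - η x) * ℓm x) ∂μ)
    (L : X → X → ℝ)
    (hL : ∀ x x', L x x' =
      (2 * πp * (πp - c x x') + πm - s x x') * ℓp x
      + (2 * πm * (πm - c x x') + πp - s x x') * ℓm x')
    (n : ℕ) (hn : 1 ≤ n)
    (ν : Measure (Fin n → X × X)) (hν : ν = Measure.pi fun _ => μ.prod μ) :
    ∀ lam ∈ Set.Icc (0 : ℝ) 1,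
      ∫ D, (1 / (n : ℝ)) *
        ∑ i, (lam * L (D i).1 (D i).2 + (1 - lam) * L (D i).2 (D i).1) ∂ν = R :=
  sconfconfdiff_lambda_weighted_unbiased_general μ η hη hη0 hη1 πp πm hπp hπm s c hs hc Cℓ ℓp ℓm hℓp
    hℓm hℓp0 hℓpC hℓm0 hℓmC R hR L hL n hn ν hν
end

section
/- (Theorem 3, minimum-variance estimator.) For λ ∈ [0,1] define Ŝ_λ(D) = (1/n)·Σ_{i=1}^{n} (λ·L(xᵢ,xᵢ') + (1−λ)·L(xᵢ',xᵢ)) on the sample space ((X×X)^n, ν). Then for every λ ∈ [0,1], the variance of Ŝ_{1/2} under ν is at most the variance of Ŝ_λ under ν; i.e., the estimator with λ = 1/2 has minimum variance among all the λ-weighted unbiased risk estimators. -/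
/-!
Ŝ_{1/2} is the pointwise average of Ŝ_λ and Ŝ_{1-λ}. Swapping the two points of every pair
preserves ν and turns Ŝ_λ into Ŝ_{1-λ}, so these two have the same variance, and the
variance of an average is at most the average of the variances. Both estimators are square
integrable because L is a polynomial in the bounded functions η, ℓ₊, ℓ₋.
-/

open MeasureTheory ProbabilityTheory

section Variance

variable {Ω : Type*} [MeasurableSpace Ω] {μ : Measure Ω} [IsFiniteMeasure μ] {X Y : Ω → ℝ}

lemma variance_add_le_two_mul_add (hX : MemLp X 2 μ) (hY : MemLp Y 2 μ) :
    Var[fun ω ↦ X ω + Y ω; μ] ≤ 2 * (Var[X; μ] + Var[Y; μ]) := by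
  -- parallelogram law: the covariances cancel in `Var[X + Y] + Var[X - Y]`
  have h_add := variance_fun_add hX hY
  have h_sub := variance_fun_sub hX hY
  linarith [variance_nonneg (fun ω ↦ X ω - Y ω) μ]

lemma variance_midpoint_le (hX : MemLp X 2 μ) (hY : MemLp Y 2 μ) :
    Var[fun ω ↦ (X ω + Y ω) / 2; μ] ≤ (Var[X; μ] + Var[Y; μ]) / 2 := by
  simp_rw [div_eq_mul_inv]
  rw [variance_mul_const]
  linarith [variance_add_le_two_mul_add hX hY]

end Variance

section PairEstimator

variable {X : Type*} {n : ℕ}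

noncomputable def weightedPairEstimator (L : X → X → ℝ) (lam : ℝ) (D : Fin n → X × X) : ℝ :=
  (1 / (n : ℝ)) * ∑ i, (lam * L (D i).1 (D i).2 + (1 - lam) * L (D i).2 (D i).1)

variable (L : X → X → ℝ)

lemma weightedPairEstimator_one_sub (lam : ℝ) (D : Fin n → X × X) :
    weightedPairEstimator L (1 - lam) D = weightedPairEstimator L lam (fun i ↦ (D i).swap) := by
  unfold weightedPairEstimator
  congr 1
  exact Finset.sum_congr rfl fun i _ ↦ by simp only [Prod.fst_swap, Prod.snd_swap]; ring

lemma weightedPairEstimator_half (lam : ℝ) (D : Fin n → X × X) :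
    weightedPairEstimator L (1 / 2) D =
      (weightedPairEstimator L lam D + weightedPairEstimator L (1 - lam) D) / 2 := by
  unfold weightedPairEstimator
  rw [← mul_add, ← Finset.sum_add_distrib, mul_div_assoc, Finset.sum_div]
  congr 1
  exact Finset.sum_congr rfl fun i _ ↦ by ring

variable [MeasurableSpace X] {μ : Measure X} [IsProbabilityMeasure μ]

lemma measurePreserving_swap_pairs :
    MeasurePreserving (fun (D : Fin n → X × X) i ↦ (D i).swap)
      (Measure.pi fun _ ↦ μ.prod μ) (Measure.pi fun _ ↦ μ.prod μ) :=
  measurePreserving_pi _ _ fun _ ↦ Measure.measurePreserving_swap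

lemma memLp_weightedPairEstimator {p : ENNReal} (hL : MemLp (Function.uncurry L) p (μ.prod μ))
    (lam : ℝ) : MemLp (weightedPairEstimator L lam) p (Measure.pi fun _ : Fin n ↦ μ.prod μ) := by
  have h_eval (i : Fin n) : MemLp (fun D : Fin n → X × X ↦ L (D i).1 (D i).2) p
      (Measure.pi fun _ ↦ μ.prod μ) :=
    hL.comp_measurePreserving (measurePreserving_eval _ i)
  have h_eval_swap (i : Fin n) : MemLp (fun D : Fin n → X × X ↦ L (D i).2 (D i).1) p
      (Measure.pi fun _ ↦ μ.prod μ) :=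
    hL.comp_measurePreserving (Measure.measurePreserving_swap.comp (measurePreserving_eval _ i))
  exact (memLp_finsetSum _ fun i _ ↦
    ((h_eval i).const_mul lam).add ((h_eval_swap i).const_mul (1 - lam))).const_mul _

theorem variance_weightedPairEstimator_half_le (hL : MemLp (Function.uncurry L) 2 (μ.prod μ))
    (lam : ℝ) :
    Var[weightedPairEstimator L (1 / 2); Measure.pi fun _ : Fin n ↦ μ.prod μ]
      ≤ Var[weightedPairEstimator L lam; Measure.pi fun _ : Fin n ↦ μ.prod μ] := by
  have h_swap : Var[weightedPairEstimator L (1 - lam); Measure.pi fun _ : Fin n ↦ μ.prod μ]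
      = Var[weightedPairEstimator L lam; Measure.pi fun _ : Fin n ↦ μ.prod μ] := by
    rw [funext (weightedPairEstimator_one_sub L lam)]
    exact measurePreserving_swap_pairs.variance_fun_comp
      (memLp_weightedPairEstimator L hL lam).aemeasurable
  calc _ = Var[fun D ↦ (weightedPairEstimator L lam D + weightedPairEstimator L (1 - lam) D) / 2;
          Measure.pi fun _ : Fin n ↦ μ.prod μ] := by
        rw [funext (weightedPairEstimator_half L lam)]
    _ ≤ _ := variance_midpoint_le (memLp_weightedPairEstimator L hL lam)
          (memLp_weightedPairEstimator L hL (1 - lam))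
    _ = _ := by rw [h_swap]; ring

end PairEstimator

lemma memLp_top_of_nonneg_of_le {α : Type*} [MeasurableSpace α] {μ : Measure α} {f : α → ℝ}
    {C : ℝ} (hf : Measurable f) (hf0 : ∀ x, 0 ≤ f x) (hfC : ∀ x, f x ≤ C) : MemLp f ⊤ μ :=
  memLp_top_of_bound hf.aestronglyMeasurable C
    (ae_of_all _ fun x ↦ by rw [Real.norm_eq_abs, abs_of_nonneg (hf0 x)]; exact hfC x)

lemma memLp_top_confidence_coeff {X : Type*} [MeasurableSpace X] {μ : Measure X}
    [IsProbabilityMeasure μ] {η : X → ℝ} (hη : MemLp η ⊤ μ) (a b : ℝ) :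
    MemLp (fun z : X × X ↦ 2 * a * (a - (η z.2 - η z.1)) + b
      - (η z.1 * η z.2 + (1 - η z.1) * (1 - η z.2))) ⊤ (μ.prod μ) := by
  have h₁ : MemLp (fun z : X × X ↦ η z.1) ⊤ (μ.prod μ) :=
    hη.comp_measurePreserving measurePreserving_fst
  have h₂ : MemLp (fun z : X × X ↦ η z.2) ⊤ (μ.prod μ) :=
    hη.comp_measurePreserving measurePreserving_snd
  exact ((((memLp_const a).sub (h₂.sub h₁)).const_mul (2 * a)).add (memLp_const b)).sub
    ((h₂.mul' h₁).add (((memLp_const 1).sub h₂).mul' ((memLp_const 1).sub h₁)))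

theorem sconfconfdiff_half_min_variance_general
    {X : Type*} [MeasurableSpace X] (μ : Measure X) [IsProbabilityMeasure μ]
    (η : X → ℝ) (hη : Measurable η) (hη0 : ∀ x, 0 ≤ η x) (hη1 : ∀ x, η x ≤ 1)
    (πp πm : ℝ)
    (s c : X → X → ℝ)
    (hs : ∀ x x', s x x' = η x * η x' + (1 - η x) * (1 - η x'))
    (hc : ∀ x x', c x x' = η x' - η x)
    (Cℓ : ℝ)
    (ℓp ℓm : X → ℝ) (hℓp : Measurable ℓp) (hℓm : Measurable ℓm)
    (hℓp0 : ∀ x, 0 ≤ ℓp x) (hℓpC : ∀ x, ℓp x ≤ Cℓ)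
    (hℓm0 : ∀ x, 0 ≤ ℓm x) (hℓmC : ∀ x, ℓm x ≤ Cℓ)
    (L : X → X → ℝ)
    (hL : ∀ x x', L x x' =
      (2 * πp * (πp - c x x') + πm - s x x') * ℓp x
      + (2 * πm * (πm - c x x') + πp - s x x') * ℓm x')
    (n : ℕ)
    (ν : Measure (Fin n → X × X)) (hν : ν = Measure.pi fun _ => μ.prod μ)
    (S : ℝ → (Fin n → X × X) → ℝ)
    (hS : ∀ lam D, S lam D = (1 / (n : ℝ)) *
      ∑ i, (lam * L (D i).1 (D i).2 + (1 - lam) * L (D i).2 (D i).1)) :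
    ∀ lam ∈ Set.Icc (0 : ℝ) 1,
      variance (S (1 / 2)) ν ≤ variance (S lam) ν := by
  intro lam _
  obtain rfl : S = weightedPairEstimator L := funext fun lam ↦ funext (hS lam)
  have hη' := memLp_top_of_nonneg_of_le (μ := μ) hη hη0 hη1
  have hℓp' : MemLp (fun z : X × X ↦ ℓp z.1) ⊤ (μ.prod μ) :=
    (memLp_top_of_nonneg_of_le hℓp hℓp0 hℓpC).comp_measurePreserving measurePreserving_fst
  have hℓm' : MemLp (fun z : X × X ↦ ℓm z.2) ⊤ (μ.prod μ) :=
    (memLp_top_of_nonneg_of_le hℓm hℓm0 hℓmC).comp_measurePreserving measurePreserving_snd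
  have hL_top : MemLp (Function.uncurry L) ⊤ (μ.prod μ) := by
    rw [show Function.uncurry L = fun z ↦
        (2 * πp * (πp - (η z.2 - η z.1)) + πm
          - (η z.1 * η z.2 + (1 - η z.1) * (1 - η z.2))) * ℓp z.1
        + (2 * πm * (πm - (η z.2 - η z.1)) + πp
          - (η z.1 * η z.2 + (1 - η z.1) * (1 - η z.2))) * ℓm z.2
      from funext fun z ↦ by simp only [Function.uncurry, hL, hs, hc]]
    exact (hℓp'.mul' (memLp_top_confidence_coeff hη' πp πm)).add
      (hℓm'.mul' (memLp_top_confidence_coeff hη' πm πp))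
  rw [hν]
  exact variance_weightedPairEstimator_half_le L (hL_top.mono_exponent le_top) lam

/-- (Theorem 3, minimum-variance estimator.) Among all λ-weighted unbiased risk
estimators, the one with λ = 1/2 has minimum variance. -/
theorem sconfconfdiff_half_min_variance
    {X : Type*} [MeasurableSpace X] (μ : Measure X) [IsProbabilityMeasure μ]
    (η : X → ℝ) (hη : Measurable η) (hη0 : ∀ x, 0 ≤ η x) (hη1 : ∀ x, η x ≤ 1)
    (πp πm : ℝ) (hπp : πp = ∫ x, η x ∂μ) (hπm : πm = 1 - πp)
    (s c : X → X → ℝ)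
    (hs : ∀ x x', s x x' = η x * η x' + (1 - η x) * (1 - η x'))
    (hc : ∀ x x', c x x' = η x' - η x)
    (Cℓ : ℝ) (hCℓ : 0 ≤ Cℓ)
    (ℓp ℓm : X → ℝ) (hℓp : Measurable ℓp) (hℓm : Measurable ℓm)
    (hℓp0 : ∀ x, 0 ≤ ℓp x) (hℓpC : ∀ x, ℓp x ≤ Cℓ)
    (hℓm0 : ∀ x, 0 ≤ ℓm x) (hℓmC : ∀ x, ℓm x ≤ Cℓ)
    (L : X → X → ℝ)
    (hL : ∀ x x', L x x' =
      (2 * πp * (πp - c x x') + πm - s x x') * ℓp x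
      + (2 * πm * (πm - c x x') + πp - s x x') * ℓm x')
    (n : ℕ) (hn : 1 ≤ n)
    (ν : Measure (Fin n → X × X)) (hν : ν = Measure.pi fun _ => μ.prod μ)
    (S : ℝ → (Fin n → X × X) → ℝ)
    (hS : ∀ lam D, S lam D = (1 / (n : ℝ)) *
      ∑ i, (lam * L (D i).1 (D i).2 + (1 - lam) * L (D i).2 (D i).1)) :
    ∀ lam ∈ Set.Icc (0 : ℝ) 1,
      variance (S (1 / 2)) ν ≤ variance (S lam) ν :=
  sconfconfdiff_half_min_variance_general μ η hη hη0 hη1 πp πm s c hs hc Cℓ ℓp ℓm hℓp hℓm hℓp0 hℓpC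
    hℓm0 hℓmC L hL n ν hν S hS
end

section
/- (Deterministic deviation bound in the proof of Theorem B.2.) Let n ≥ 1, C_ℓ ≥ 0, γ ∈ [0,1], and let π₊ ∈ ℝ with π₋ = 1 − π₊ and π₊ ≠ π₋. For each i ∈ {1,…,n} let sᵢ, s̄ᵢ, cᵢ, c̄ᵢ ∈ ℝ and let aᵢ, a'ᵢ, bᵢ, b'ᵢ ∈ [0, C_ℓ]. Define R̂_Sconf = (1/(2n))·Σᵢ [ (sᵢ−π₋)·(aᵢ+a'ᵢ)/(π₊−π₋) + (π₊−sᵢ)·(bᵢ+b'ᵢ)/(π₊−π₋) ] and R̂_CD = (1/(2n))·Σᵢ [ (π₊−cᵢ)·aᵢ + (π₋−cᵢ)·b'ᵢ + (π₊+cᵢ)·a'ᵢ + (π₋+cᵢ)·bᵢ ], and define R̄_Sconf, R̄_CD by the same formulas with sᵢ, cᵢ replaced by s̄ᵢ, c̄ᵢ. Then |(γ·R̄_Sconf + (1−γ)·R̄_CD) − (γ·R̂_Sconf + (1−γ)·R̂_CD)| ≤ γ·C_ℓ·Σᵢ|s̄ᵢ−sᵢ| / (n·|π₊−π₋|) + 2(1−γ)·C_ℓ·Σᵢ|c̄ᵢ−cᵢ|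 / n. -/
/-!
Both empirical risks are affine in the label vector, so each deviation is an average of
`(s̄ᵢ - sᵢ) wᵢ` with a weight `wᵢ` that is a signed combination `a + a' - b - b'` of four losses
in `[0, C_ℓ]` (divided by `π₊ - π₋` for Sconf), hence `|wᵢ| ≤ 2 C_ℓ`. The convex combination
then mixes the two deviation bounds.
-/

open Finset

theorem abs_add_sub_add_le_two_mul {C x y z w : ℝ} (hx : x ∈ Set.Icc 0 C) (hy : y ∈ Set.Icc 0 C)
    (hz : z ∈ Set.Icc 0 C) (hw : w ∈ Set.Icc 0 C) : |x + y - (z + w)| ≤ 2 * C := by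
  obtain ⟨hx0, hxC⟩ := hx
  obtain ⟨hy0, hyC⟩ := hy
  obtain ⟨hz0, hzC⟩ := hz
  obtain ⟨hw0, hwC⟩ := hw
  rw [abs_le]
  constructor <;> linarith

theorem Finset.abs_sum_mul_le {ι : Type*} (t : Finset ι) (d w : ι → ℝ) {M : ℝ}
    (hw : ∀ i ∈ t, |w i| ≤ M) : |∑ i ∈ t, d i * w i| ≤ M * ∑ i ∈ t, |d i| := by
  rw [mul_sum]
  refine (abs_sum_le_sum_abs _ _).trans (sum_le_sum fun i hi => ?_)
  rw [abs_mul, mul_comm M]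
  exact mul_le_mul_of_nonneg_left (hw i hi) (abs_nonneg _)

theorem abs_convexComb_sub_le {γ x x' y y' u v : ℝ} (hγ : γ ∈ Set.Icc (0 : ℝ) 1)
    (hx : |x' - x| ≤ u) (hy : |y' - y| ≤ v) :
    |(γ * x' + (1 - γ) * y') - (γ * x + (1 - γ) * y)| ≤ γ * u + (1 - γ) * v := by
  obtain ⟨hγ0, hγ1⟩ := hγ
  have hγ1' : 0 ≤ 1 - γ := sub_nonneg.mpr hγ1
  calc |(γ * x' + (1 - γ) * y') - (γ * x + (1 - γ) * y)|
      = |γ * (x' - x) + (1 - γ) * (y' - y)| := by ring_nf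
    _ ≤ γ * |x' - x| + (1 - γ) * |y' - y| := by
        refine (abs_add_le _ _).trans ?_
        rw [abs_mul, abs_mul, abs_of_nonneg hγ0, abs_of_nonneg hγ1']
    _ ≤ γ * u + (1 - γ) * v := by gcongr

section Risks

variable {n : ℕ} (πp πm : ℝ) (a a' b b' : Fin n → ℝ)

/-- The Sconf empirical risk `R̂_Sconf` of the losses `a, a', b, b'` under the labels `s`. -/
noncomputable def sconfRisk (s : Fin n → ℝ) : ℝ :=
  (1 / (2 * (n : ℝ))) * ∑ i,
    ((s i - πm) * (a i + a' i) / (πp - πm) + (πp - s i) * (b i + b' i) / (πp - πm))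

/-- The ConfDiff empirical risk `R̂_CD` of the losses `a, a', b, b'` under the labels `c`. -/
noncomputable def confDiffRisk (c : Fin n → ℝ) : ℝ :=
  (1 / (2 * (n : ℝ))) * ∑ i,
    ((πp - c i) * a i + (πm - c i) * b' i + (πp + c i) * a' i + (πm + c i) * b i)

theorem sconfRisk_sub (s sb : Fin n → ℝ) :
    sconfRisk πp πm a a' b b' sb - sconfRisk πp πm a a' b b' s =
      (1 / (2 * (n : ℝ))) * ∑ i, (sb i - s i) * ((a i + a' i - (b i + b' i)) / (πp - πm)) := by
  simp only [sconfRisk, ← mul_sub, ← sum_sub_distrib]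
  congr 1
  refine sum_congr rfl fun i _ => ?_
  ring

theorem confDiffRisk_sub (c cb : Fin n → ℝ) :
    confDiffRisk πp πm a a' b b' cb - confDiffRisk πp πm a a' b b' c =
      (1 / (2 * (n : ℝ))) * ∑ i, (cb i - c i) * (a' i + b i - (a i + b' i)) := by
  simp only [confDiffRisk, ← mul_sub, ← sum_sub_distrib]
  congr 1
  refine sum_congr rfl fun i _ => ?_
  ring

variable {a a' b b'} {C : ℝ} (ha : ∀ i, a i ∈ Set.Icc 0 C) (ha' : ∀ i, a' i ∈ Set.Icc 0 C)
  (hb : ∀ i, b i ∈ Set.Icc 0 C) (hb' : ∀ i, b' i ∈ Set.Icc 0 C)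
include ha ha' hb hb'

theorem abs_sconfRisk_sub_le (s sb : Fin n → ℝ) :
    |sconfRisk πp πm a a' b b' sb - sconfRisk πp πm a a' b b' s| ≤
      C * (∑ i, |sb i - s i|) / ((n : ℝ) * |πp - πm|) := by
  have hw : ∀ i ∈ univ, |(a i + a' i - (b i + b' i)) / (πp - πm)| ≤ 2 * C / |πp - πm| :=
    fun i _ => by
      rw [abs_div]
      gcongr
      exact abs_add_sub_add_le_two_mul (ha i) (ha' i) (hb i) (hb' i)
  calc |sconfRisk πp πm a a' b b' sb - sconfRisk πp πm a a' b b' s|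
      = 1 / (2 * (n : ℝ)) * |∑ i, (sb i - s i) * ((a i + a' i - (b i + b' i)) / (πp - πm))| := by
        rw [sconfRisk_sub, abs_mul, abs_of_nonneg (by positivity)]
    _ ≤ 1 / (2 * (n : ℝ)) * (2 * C / |πp - πm| * ∑ i, |sb i - s i|) := by
        gcongr
        exact abs_sum_mul_le _ _ _ hw
    _ = C * (∑ i, |sb i - s i|) / ((n : ℝ) * |πp - πm|) := by ring

theorem abs_confDiffRisk_sub_le (c cb : Fin n → ℝ) :
    |confDiffRisk πp πm a a' b b' cb - confDiffRisk πp πm a a' b b' c| ≤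
      C * (∑ i, |cb i - c i|) / (n : ℝ) := by
  have hw : ∀ i ∈ univ, |a' i + b i - (a i + b' i)| ≤ 2 * C :=
    fun i _ => abs_add_sub_add_le_two_mul (ha' i) (hb i) (ha i) (hb' i)
  calc |confDiffRisk πp πm a a' b b' cb - confDiffRisk πp πm a a' b b' c|
      = 1 / (2 * (n : ℝ)) * |∑ i, (cb i - c i) * (a' i + b i - (a i + b' i))| := by
        rw [confDiffRisk_sub, abs_mul, abs_of_nonneg (by positivity)]
    _ ≤ 1 / (2 * (n : ℝ)) * (2 * C * ∑ i, |cb i - c i|) := by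
        gcongr
        exact abs_sum_mul_le _ _ _ hw
    _ = C * (∑ i, |cb i - c i|) / (n : ℝ) := by ring

end Risks

theorem sconfconfdiff_convex_noisy_deviation_bound_general
    (n : ℕ) (Cℓ : ℝ) (hCℓ : 0 ≤ Cℓ)
    (γ : ℝ) (hγ : γ ∈ Set.Icc (0 : ℝ) 1)
    (πp πm : ℝ)
    (s sb c cb : Fin n → ℝ)
    (a a' b b' : Fin n → ℝ)
    (ha : ∀ i, a i ∈ Set.Icc 0 Cℓ) (ha' : ∀ i, a' i ∈ Set.Icc 0 Cℓ)
    (hb : ∀ i, b i ∈ Set.Icc 0 Cℓ) (hb' : ∀ i, b' i ∈ Set.Icc 0 Cℓ)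
    (RSconf RCD RbSconf RbCD : ℝ)
    (hRSconf : RSconf = (1 / (2 * (n : ℝ))) * ∑ i,
      ((s i - πm) * (a i + a' i) / (πp - πm) + (πp - s i) * (b i + b' i) / (πp - πm)))
    (hRCD : RCD = (1 / (2 * (n : ℝ))) * ∑ i,
      ((πp - c i) * a i + (πm - c i) * b' i + (πp + c i) * a' i + (πm + c i) * b i))
    (hRbSconf : RbSconf = (1 / (2 * (n : ℝ))) * ∑ i,
      ((sb i - πm) * (a i + a' i) / (πp - πm) + (πp - sb i) * (b i + b' i) / (πp - πm)))
    (hRbCD : RbCD = (1 / (2 * (n : ℝ))) * ∑ i,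
      ((πp - cb i) * a i + (πm - cb i) * b' i + (πp + cb i) * a' i + (πm + cb i) * b i)) :
    |(γ * RbSconf + (1 - γ) * RbCD) - (γ * RSconf + (1 - γ) * RCD)| ≤
      γ * Cℓ * (∑ i, |sb i - s i|) / ((n : ℝ) * |πp - πm|)
      + 2 * (1 - γ) * Cℓ * (∑ i, |cb i - c i|) / (n : ℝ) := by
  have hSconf : |RbSconf - RSconf| ≤ Cℓ * (∑ i, |sb i - s i|) / ((n : ℝ) * |πp - πm|) := by
    subst hRSconf hRbSconf
    exact abs_sconfRisk_sub_le πp πm ha ha' hb hb' s sb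
  have hCD : |RbCD - RCD| ≤ 2 * Cℓ * (∑ i, |cb i - c i|) / (n : ℝ) := by
    subst hRCD hRbCD
    refine (abs_confDiffRisk_sub_le πp πm ha ha' hb hb' c cb).trans ?_
    gcongr
    linarith
  calc _ ≤ γ * (Cℓ * (∑ i, |sb i - s i|) / ((n : ℝ) * |πp - πm|))
        + (1 - γ) * (2 * Cℓ * (∑ i, |cb i - c i|) / (n : ℝ)) := abs_convexComb_sub_le hγ hSconf hCD
    _ = _ := by ring

/-- (Deterministic deviation bound in the proof of Theorem B.2.) -/
theorem sconfconfdiff_convex_noisy_deviation_bound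
    (n : ℕ) (hn : 1 ≤ n) (Cℓ : ℝ) (hCℓ : 0 ≤ Cℓ)
    (γ : ℝ) (hγ : γ ∈ Set.Icc (0 : ℝ) 1)
    (πp πm : ℝ) (hπm : πm = 1 - πp) (hne : πp ≠ πm)
    (s sb c cb : Fin n → ℝ)
    (a a' b b' : Fin n → ℝ)
    (ha : ∀ i, a i ∈ Set.Icc 0 Cℓ) (ha' : ∀ i, a' i ∈ Set.Icc 0 Cℓ)
    (hb : ∀ i, b i ∈ Set.Icc 0 Cℓ) (hb' : ∀ i, b' i ∈ Set.Icc 0 Cℓ)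
    (RSconf RCD RbSconf RbCD : ℝ)
    (hRSconf : RSconf = (1 / (2 * (n : ℝ))) * ∑ i,
      ((s i - πm) * (a i + a' i) / (πp - πm) + (πp - s i) * (b i + b' i) / (πp - πm)))
    (hRCD : RCD = (1 / (2 * (n : ℝ))) * ∑ i,
      ((πp - c i) * a i + (πm - c i) * b' i + (πp + c i) * a' i + (πm + c i) * b i))
    (hRbSconf : RbSconf = (1 / (2 * (n : ℝ))) * ∑ i,
      ((sb i - πm) * (a i + a' i) / (πp - πm) + (πp - sb i) * (b i + b' i) / (πp - πm)))
    (hRbCD : RbCD = (1 / (2 * (n : ℝ))) * ∑ i,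
      ((πp - cb i) * a i + (πm - cb i) * b' i + (πp + cb i) * a' i + (πm + cb i) * b i)) :
    |(γ * RbSconf + (1 - γ) * RbCD) - (γ * RSconf + (1 - γ) * RCD)| ≤
      γ * Cℓ * (∑ i, |sb i - s i|) / ((n : ℝ) * |πp - πm|)
      + 2 * (1 - γ) * Cℓ * (∑ i, |cb i - c i|) / (n : ℝ) :=
  sconfconfdiff_convex_noisy_deviation_bound_general n Cℓ hCℓ γ hγ πp πm s sb c cb a a' b b' ha ha'
    hb hb' RSconf RCD RbSconf RbCD hRSconf hRCD hRbSconf hRbCD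
end

section
/- (Lemma A.6, probability that some component of the empirical risk is nonpositive.) Assume C_ℓ > 0 and let a, b, c, d ≥ 0 be constants with ∫ Â dν ≥ a, ∫ B̂ dν ≥ b, ∫ Ĉ dν ≥ c, ∫ D̂ dν ≥ d. Then ν{ D ∈ (X×X)^n : Â(D) ≤ 0 or B̂(D) ≤ 0 or Ĉ(D) ≤ 0 or D̂(D) ≤ 0 } ≤ exp(−4a²n/((4π₊+1)²C_ℓ²)) + exp(−4b²n/((4π₋+1)²C_ℓ²)) + exp(−4c²n/((4π₊+1)²C_ℓ²)) + exp(−4d²n/((4π₋+1)²C_ℓ²)). -/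
/-!
Since `0 ≤ η ≤ 1`, the similarity-confidence lies in `[0, 1]` and the confidence-difference in
`[-1, 1]`, so each summand of each of the four components is a bounded function of one data pair,
with range of length `(4π + 1) Cℓ`, where `π` is `π₊` for `Â, Ĉ` and `π₋` for `B̂, D̂`. Each
component is thus `1 / (2n)` times a sum of `n` i.i.d. bounded variables, and Hoeffding's
inequality bounds the probability that it is nonpositive in terms of its mean. A union bound over
the four components finishes the proof.
-/

open MeasureTheory ProbabilityTheory Real

section

variable {Ω : Type*} [MeasurableSpace Ω] (P : Measure Ω) [IsProbabilityMeasure P]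

theorem measureReal_pi_sum_le_sub_le {g : Ω → ℝ} (hg : Measurable g) {lo hi : ℝ}
    (hbd : ∀ ω, g ω ∈ Set.Icc lo hi) (n : ℕ) {ε : ℝ} (hε : 0 ≤ ε) :
    (Measure.pi fun _ : Fin n => P).real {D | ∑ i, g (D i) ≤ n * ∫ ω, g ω ∂P - ε}
      ≤ exp (-2 * ε ^ 2 / (n * (hi - lo) ^ 2)) := by
  set m := ∫ ω, g ω ∂P
  have hsubG : HasSubgaussianMGF (fun ω => m - g ω) ((‖-lo - -hi‖₊ / 2) ^ 2) P := by
    refine (hasSubgaussianMGF_of_mem_Icc hg.neg.aemeasurable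
      (ae_of_all _ fun ω => ⟨neg_le_neg (hbd ω).2, neg_le_neg (hbd ω).1⟩)).congr
      (ae_of_all _ fun ω => ?_)
    simp only [Pi.neg_apply, integral_neg, m]
    ring
  have hsubGi (i : Fin n) : HasSubgaussianMGF (fun D : Fin n → Ω => m - g (D i))
      ((‖-lo - -hi‖₊ / 2) ^ 2) (Measure.pi fun _ => P) :=
    HasSubgaussianMGF.of_map (X := fun ω => m - g ω) (Y := fun D : Fin n → Ω => D i)
      (measurable_pi_apply i).aemeasurable
      (by rwa [(measurePreserving_eval (fun _ : Fin n => P) i).map_eq])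
  have hindep := iIndepFun_pi (μ := fun _ : Fin n => P) fun _ => hsubG.aemeasurable
  convert HasSubgaussianMGF.measure_sum_ge_le_of_iIndepFun hindep (s := .univ)
    (fun i _ => hsubGi i) hε using 2
  · ext D
    simp only [Set.mem_ofPred_eq, Finset.sum_sub_distrib, Finset.sum_const, Finset.card_univ,
      Fintype.card_fin, nsmul_eq_mul]
    constructor <;> intro h <;> linarith
  · push_cast [Finset.sum_const, Finset.card_univ, Fintype.card_fin, nsmul_eq_mul, coe_nnnorm,
      Real.norm_eq_abs, div_pow, sq_abs]
    rw [show 2 * (n * ((-lo - -hi) ^ 2 / 2 ^ 2)) = n * (hi - lo) ^ 2 / 2 by ring,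
      div_div_eq_mul_div]
    ring

theorem measure_pi_mul_sum_nonpos_le {f : Ω → ℝ} (hf : Measurable f) {lo hi : ℝ}
    (hbd : ∀ ω, f ω ∈ Set.Icc lo hi) {n : ℕ} {κ : ℝ} (hκ : 0 < κ) {a : ℝ} (ha : 0 ≤ a)
    (hae : a ≤ ∫ D, κ * ∑ i, f (D i) ∂(Measure.pi fun _ : Fin n => P)) :
    (Measure.pi fun _ : Fin n => P) {D | κ * ∑ i, f (D i) ≤ 0}
      ≤ ENNReal.ofReal (exp (-2 * a ^ 2 / (n * κ ^ 2 * (hi - lo) ^ 2))) := by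
  have hmean : ∫ D, κ * ∑ i, f (D i) ∂(Measure.pi fun _ : Fin n => P)
      = κ * (n * ∫ ω, f ω ∂P) := by
    have hint := Integrable.of_mem_Icc lo hi hf.aemeasurable (ae_of_all P hbd)
    have hinti (i : Fin n) : Integrable (fun D : Fin n → Ω => f (D i)) (Measure.pi fun _ => P) :=
      (measurePreserving_eval (fun _ : Fin n => P) i).integrable_comp_of_integrable hint
    rw [integral_const_mul, integral_finsetSum _ fun i _ => hinti i,
      Finset.sum_congr rfl fun i _ => integral_comp_eval (μ := fun _ : Fin n => P) (i := i)
        hf.aestronglyMeasurable]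
    simp
  have hsub : {D : Fin n → Ω | κ * ∑ i, f (D i) ≤ 0}
      ⊆ {D | ∑ i, f (D i) ≤ n * ∫ ω, f ω ∂P - a / κ} := by
    intro D hD
    have : a / κ ≤ n * ∫ ω, f ω ∂P := by rw [div_le_iff₀ hκ]; linarith
    have : ∑ i, f (D i) ≤ 0 := nonpos_of_mul_nonpos_right hD hκ
    simp only [Set.mem_ofPred_eq] at *
    linarith
  calc _ ≤ (Measure.pi fun _ : Fin n => P) {D | ∑ i, f (D i) ≤ n * ∫ ω, f ω ∂P - a / κ} :=
        measure_mono hsub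
    _ = ENNReal.ofReal ((Measure.pi fun _ : Fin n => P).real
          {D | ∑ i, f (D i) ≤ n * ∫ ω, f ω ∂P - a / κ}) := (ofReal_measureReal).symm
    _ ≤ _ := by
      refine ENNReal.ofReal_le_ofReal ((measureReal_pi_sum_le_sub_le P hf hbd n
        (div_nonneg ha hκ.le)).trans_eq ?_)
      congr 1
      generalize hi - lo = w
      ring

theorem coeff_mul_mem_Icc {ρ ρ' u v ℓ C : ℝ} (hρ0 : 0 ≤ ρ) (hρ1 : ρ ≤ 1) (hρρ' : ρ + ρ' = 1)
    (hu : |u| ≤ 1) (hv : v ∈ Set.Icc 0 1) (hℓ : ℓ ∈ Set.Icc 0 C) :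
    (2 * ρ * (ρ - u) + ρ' - v) * ℓ
      ∈ Set.Icc ((2 * ρ ^ 2 - 3 * ρ) * C) ((2 * ρ ^ 2 + ρ + 1) * C) := by
  obtain ⟨hu0, hu1⟩ := abs_le.1 hu
  obtain ⟨hv0, hv1⟩ := hv
  obtain ⟨hℓ0, hℓC⟩ := hℓ
  have hlo : 2 * ρ ^ 2 - 3 * ρ ≤ 2 * ρ * (ρ - u) + ρ' - v := by nlinarith
  have hhi : 2 * ρ * (ρ - u) + ρ' - v ≤ 2 * ρ ^ 2 + ρ + 1 := by nlinarith
  have hlo0 : 2 * ρ ^ 2 - 3 * ρ ≤ 0 := by nlinarith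
  have hhi0 : 0 ≤ 2 * ρ ^ 2 + ρ + 1 := by positivity
  constructor
  · nlinarith [mul_le_mul_of_nonneg_right hlo hℓ0, mul_le_mul_of_nonpos_left hℓC hlo0]
  · nlinarith [mul_le_mul_of_nonneg_right hhi hℓ0, mul_le_mul_of_nonneg_left hℓC hhi0]

/- `Â, B̂, Ĉ, D̂` are the cases `(ρ, ρ', u) = (π₊, π₋, c), (π₋, π₊, c), (π₊, π₋, -c), (π₋, π₊, -c)`,
with `v = s`. -/
theorem measure_pi_component_nonpos_le {ρ ρ' C : ℝ} (hρ0 : 0 ≤ ρ) (hρ1 : ρ ≤ 1) (hρρ' : ρ + ρ' = 1)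
    {u v ℓ : Ω → ℝ} (hu : Measurable u) (hv : Measurable v) (hℓ : Measurable ℓ)
    (hub : ∀ ω, |u ω| ≤ 1) (hvb : ∀ ω, v ω ∈ Set.Icc 0 1)
    (hℓb : ∀ ω, ℓ ω ∈ Set.Icc 0 C) {n : ℕ} (hn : 1 ≤ n) {K : (Fin n → Ω) → ℝ}
    (hK : ∀ D, K D = 1 / (2 * (n : ℝ)) * ∑ i, (2 * ρ * (ρ - u (D i)) + ρ' - v (D i)) * ℓ (D i))
    {a : ℝ} (ha : 0 ≤ a) (haK : a ≤ ∫ D, K D ∂(Measure.pi fun _ => P)) :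
    (Measure.pi fun _ => P) {D | K D ≤ 0}
      ≤ ENNReal.ofReal (exp (-(4 * a ^ 2 * n) / ((4 * ρ + 1) ^ 2 * C ^ 2))) := by
  obtain rfl : K = _ := funext hK
  have hn0 : (0 : ℝ) < n := by exact_mod_cast hn
  refine (measure_pi_mul_sum_nonpos_le P (by fun_prop)
    (fun ω => coeff_mul_mem_Icc hρ0 hρ1 hρρ' (hub ω) (hvb ω) (hℓb ω)) (by positivity) ha
    haK).trans (ENNReal.ofReal_le_ofReal (exp_le_exp.2 ?_))
  rw [show (2 * ρ ^ 2 + ρ + 1) * C - (2 * ρ ^ 2 - 3 * ρ) * C = (4 * ρ + 1) * C by ring,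
    show (n : ℝ) * (1 / (2 * n)) ^ 2 * ((4 * ρ + 1) * C) ^ 2
      = (4 * ρ + 1) ^ 2 * C ^ 2 / (4 * n) by field_simp; ring, div_div_eq_mul_div]
  -- Hoeffding gives the exponent `8 * a ^ 2 * n`; only half of it is claimed.
  gcongr
  nlinarith [sq_nonneg a]

end

theorem sconfconfdiff_nonpositive_component_probability_general
    {X : Type*} [MeasurableSpace X] (μ : Measure X) [IsProbabilityMeasure μ]
    (η : X → ℝ) (hη : Measurable η) (hη0 : ∀ x, 0 ≤ η x) (hη1 : ∀ x, η x ≤ 1)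
    (πp πm : ℝ) (hπp : πp = ∫ x, η x ∂μ) (hπm : πm = 1 - πp)
    (s c : X → X → ℝ)
    (hs : ∀ x x', s x x' = η x * η x' + (1 - η x) * (1 - η x'))
    (hc : ∀ x x', c x x' = η x' - η x)
    (Cℓ : ℝ)
    (ℓp ℓm : X → ℝ) (hℓp : Measurable ℓp) (hℓm : Measurable ℓm)
    (hℓp0 : ∀ x, 0 ≤ ℓp x) (hℓpC : ∀ x, ℓp x ≤ Cℓ)
    (hℓm0 : ∀ x, 0 ≤ ℓm x) (hℓmC : ∀ x, ℓm x ≤ Cℓ)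
    (n : ℕ) (hn : 1 ≤ n)
    (ν : Measure (Fin n → X × X)) (hν : ν = Measure.pi fun _ => μ.prod μ)
    (Ahat Bhat Chat Dhat : (Fin n → X × X) → ℝ)
    (hAhat : ∀ D, Ahat D = (1 / (2 * (n : ℝ))) * ∑ i,
      (2 * πp * (πp - c (D i).1 (D i).2) + πm - s (D i).1 (D i).2) * ℓp (D i).1)
    (hBhat : ∀ D, Bhat D = (1 / (2 * (n : ℝ))) * ∑ i,
      (2 * πm * (πm - c (D i).1 (D i).2) + πp - s (D i).1 (D i).2) * ℓm (D i).2)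
    (hChat : ∀ D, Chat D = (1 / (2 * (n : ℝ))) * ∑ i,
      (2 * πp * (πp + c (D i).1 (D i).2) + πm - s (D i).1 (D i).2) * ℓp (D i).2)
    (hDhat : ∀ D, Dhat D = (1 / (2 * (n : ℝ))) * ∑ i,
      (2 * πm * (πm + c (D i).1 (D i).2) + πp - s (D i).1 (D i).2) * ℓm (D i).1)
    (a b cc d : ℝ) (ha : 0 ≤ a) (hb : 0 ≤ b) (hcc : 0 ≤ cc) (hd : 0 ≤ d)
    (hEA : a ≤ ∫ D, Ahat D ∂ν) (hEB : b ≤ ∫ D, Bhat D ∂ν)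
    (hEC : cc ≤ ∫ D, Chat D ∂ν) (hED : d ≤ ∫ D, Dhat D ∂ν) :
    ν {D | Ahat D ≤ 0 ∨ Bhat D ≤ 0 ∨ Chat D ≤ 0 ∨ Dhat D ≤ 0}
      ≤ ENNReal.ofReal
        (exp (-(4 * a ^ 2 * n) / ((4 * πp + 1) ^ 2 * Cℓ ^ 2))
          + exp (-(4 * b ^ 2 * n) / ((4 * πm + 1) ^ 2 * Cℓ ^ 2))
          + exp (-(4 * cc ^ 2 * n) / ((4 * πp + 1) ^ 2 * Cℓ ^ 2))
          + exp (-(4 * d ^ 2 * n) / ((4 * πm + 1) ^ 2 * Cℓ ^ 2))) := by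
  subst hν
  have hπp0 : 0 ≤ πp := hπp ▸ integral_nonneg hη0
  have hπp1 : πp ≤ 1 := hπp ▸ (integral_mono_of_nonneg (ae_of_all _ hη0) (integrable_const 1)
    (ae_of_all _ hη1)).trans_eq (by simp)
  have hcm : Measurable fun q : X × X => c q.1 q.2 := by simp only [hc]; fun_prop
  have hsm : Measurable fun q : X × X => s q.1 q.2 := by simp only [hs]; fun_prop
  have hcb (q : X × X) : |c q.1 q.2| ≤ 1 := by
    rw [hc, abs_le]; constructor <;> linarith [hη0 q.1, hη1 q.1, hη0 q.2, hη1 q.2]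
  have hcb' (q : X × X) : |-c q.1 q.2| ≤ 1 := (abs_neg _).trans_le (hcb q)
  have hsb (q : X × X) : s q.1 q.2 ∈ Set.Icc 0 1 := by
    rw [hs]; constructor <;> nlinarith [hη0 q.1, hη1 q.1, hη0 q.2, hη1 q.2]
  have hA := measure_pi_component_nonpos_le (μ.prod μ) hπp0 hπp1 (by linarith) hcm hsm
    (hℓp.comp measurable_fst) hcb hsb (fun q => ⟨hℓp0 q.1, hℓpC q.1⟩) hn hAhat ha hEA
  have hB := measure_pi_component_nonpos_le (μ.prod μ) (by linarith) (by linarith) (by linarith)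
    hcm hsm (hℓm.comp measurable_snd) hcb hsb (fun q => ⟨hℓm0 q.2, hℓmC q.2⟩) hn hBhat hb hEB
  have hC := measure_pi_component_nonpos_le (μ.prod μ) (ρ := πp) (ρ' := πm)
    (u := fun q => -c q.1 q.2) (v := fun q => s q.1 q.2) (ℓ := fun q => ℓp q.2)
    hπp0 hπp1 (by linarith) hcm.neg hsm (by fun_prop) hcb' hsb
    (fun q => ⟨hℓp0 q.2, hℓpC q.2⟩) hn (by simpa only [sub_neg_eq_add] using hChat) hcc hEC
  have hD := measure_pi_component_nonpos_le (μ.prod μ) (ρ := πm) (ρ' := πp)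
    (u := fun q => -c q.1 q.2) (v := fun q => s q.1 q.2) (ℓ := fun q => ℓm q.1)
    (by linarith) (by linarith) (by linarith) hcm.neg hsm (by fun_prop) hcb' hsb
    (fun q => ⟨hℓm0 q.1, hℓmC q.1⟩) hn (by simpa only [sub_neg_eq_add] using hDhat) hd hED
  simp only [Set.ofPred_or]
  rw [ENNReal.ofReal_add (by positivity) (by positivity),
    ENNReal.ofReal_add (by positivity) (by positivity),
    ENNReal.ofReal_add (by positivity) (by positivity)]
  refine ((measure_union_le _ _).trans (add_le_add_right ((measure_union_le _ _).trans
    (add_le_add_right (measure_union_le _ _) _)) _)).trans ?_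
  rw [← add_assoc, ← add_assoc]
  gcongr

/-- (Lemma A.6, probability that some component of the empirical risk is nonpositive.) -/
theorem sconfconfdiff_nonpositive_component_probability
    {X : Type*} [MeasurableSpace X] (μ : Measure X) [IsProbabilityMeasure μ]
    (η : X → ℝ) (hη : Measurable η) (hη0 : ∀ x, 0 ≤ η x) (hη1 : ∀ x, η x ≤ 1)
    (πp πm : ℝ) (hπp : πp = ∫ x, η x ∂μ) (hπm : πm = 1 - πp)
    (s c : X → X → ℝ)
    (hs : ∀ x x', s x x' = η x * η x' + (1 - η x) * (1 - η x'))
    (hc : ∀ x x', c x x' = η x' - η x)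
    (Cℓ : ℝ) (hCℓ : 0 < Cℓ)
    (ℓp ℓm : X → ℝ) (hℓp : Measurable ℓp) (hℓm : Measurable ℓm)
    (hℓp0 : ∀ x, 0 ≤ ℓp x) (hℓpC : ∀ x, ℓp x ≤ Cℓ)
    (hℓm0 : ∀ x, 0 ≤ ℓm x) (hℓmC : ∀ x, ℓm x ≤ Cℓ)
    (n : ℕ) (hn : 1 ≤ n)
    (ν : Measure (Fin n → X × X)) (hν : ν = Measure.pi fun _ => μ.prod μ)
    (Ahat Bhat Chat Dhat : (Fin n → X × X) → ℝ)
    (hAhat : ∀ D, Ahat D = (1 / (2 * (n : ℝ))) * ∑ i,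
      (2 * πp * (πp - c (D i).1 (D i).2) + πm - s (D i).1 (D i).2) * ℓp (D i).1)
    (hBhat : ∀ D, Bhat D = (1 / (2 * (n : ℝ))) * ∑ i,
      (2 * πm * (πm - c (D i).1 (D i).2) + πp - s (D i).1 (D i).2) * ℓm (D i).2)
    (hChat : ∀ D, Chat D = (1 / (2 * (n : ℝ))) * ∑ i,
      (2 * πp * (πp + c (D i).1 (D i).2) + πm - s (D i).1 (D i).2) * ℓp (D i).2)
    (hDhat : ∀ D, Dhat D = (1 / (2 * (n : ℝ))) * ∑ i,
      (2 * πm * (πm + c (D i).1 (D i).2) + πp - s (D i).1 (D i).2) * ℓm (D i).1)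
    (a b cc d : ℝ) (ha : 0 ≤ a) (hb : 0 ≤ b) (hcc : 0 ≤ cc) (hd : 0 ≤ d)
    (hEA : a ≤ ∫ D, Ahat D ∂ν) (hEB : b ≤ ∫ D, Bhat D ∂ν)
    (hEC : cc ≤ ∫ D, Chat D ∂ν) (hED : d ≤ ∫ D, Dhat D ∂ν) :
    ν {D | Ahat D ≤ 0 ∨ Bhat D ≤ 0 ∨ Chat D ≤ 0 ∨ Dhat D ≤ 0}
      ≤ ENNReal.ofReal
        (exp (-(4 * a ^ 2 * n) / ((4 * πp + 1) ^ 2 * Cℓ ^ 2))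
          + exp (-(4 * b ^ 2 * n) / ((4 * πm + 1) ^ 2 * Cℓ ^ 2))
          + exp (-(4 * cc ^ 2 * n) / ((4 * πp + 1) ^ 2 * Cℓ ^ 2))
          + exp (-(4 * d ^ 2 * n) / ((4 * πm + 1) ^ 2 * Cℓ ^ 2))) :=
  sconfconfdiff_nonpositive_component_probability_general μ η hη hη0 hη1 πp πm hπp hπm s c hs hc Cℓ
    ℓp ℓm hℓp hℓm hℓp0 hℓpC hℓm0 hℓmC n hn ν hν Ahat Bhat Chat Dhat hAhat hBhat hChat hDhat a b cc d
    ha hb hcc hd hEA hEB hEC hED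
end

section
/- (Population unbiasedness of the Sconf risk, Eq. (3).) Assume π₊ ≠ π₋. Then ∫_{X×X} (1/2)·[ (π₋ − s(x,x'))·(ℓ₊(x) + ℓ₊(x'))/(π₋ − π₊) + (π₊ − s(x,x'))·(ℓ₋(x) + ℓ₋(x'))/(π₊ − π₋) ] d(μ⊗μ)(x,x') = R; i.e., the per-pair Sconf loss is an unbiased estimator of the classification risk. -/
/-!
Since `s` is symmetric and `μ ⊗ μ` is invariant under swapping the coordinates, the loss of the
unordered pair integrates to the same value as the loss
`((π₋ - s(x,x')) ℓ₊(x) - (π₊ - s(x,x')) ℓ₋(x)) / (π₋ - π₊)` of the ordered pair. This is affine in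
`η(x')`, so integrating out `x'` replaces `s(x,x')` by `η(x) π₊ + (1 - η(x)) π₋`; then
`π₋ - s = (π₋ - π₊) η(x)` and `π₊ - s = (π₊ - π₋) (1 - η(x))`, leaving the integrand of `R`.
-/

open MeasureTheory Set

namespace MeasureTheory

variable {X : Type*} [MeasurableSpace X] {μ : Measure X}

lemma Integrable.mul_of_mem_Icc_left {f g : X → ℝ} {a b : ℝ} (hg : Integrable g μ)
    (hf : AEStronglyMeasurable f μ) (hab : ∀ x, f x ∈ Icc a b) :
    Integrable (fun x => f x * g x) μ :=
  hg.bdd_mul hf (ae_of_all _ fun x => abs_le_max_abs_abs (hab x).1 (hab x).2)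

lemma integral_prod_add_swap_div_two [SFinite μ] {F : X × X → ℝ}
    (hF : Integrable F (μ.prod μ)) :
    ∫ p, (F p + F p.swap) / 2 ∂μ.prod μ = ∫ p, F p ∂μ.prod μ := by
  have hF_swap : Integrable (fun p => F p.swap) (μ.prod μ) := hF.swap
  rw [integral_div, integral_add hF hF_swap, integral_prod_swap]
  ring

variable {Y : Type*} [MeasurableSpace Y] {ν : Measure Y} [IsProbabilityMeasure ν]
  {u v : X → ℝ} {w : Y → ℝ}

lemma Integrable.prod_add_mul (hu : Integrable u μ) (hv : Integrable v μ)
    (hw : Integrable w ν) : Integrable (fun p : X × Y => u p.1 + v p.1 * w p.2) (μ.prod ν) :=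
  (hu.comp_fst ν).add (hv.mul_prod hw)

lemma integral_prod_add_mul [SFinite μ] (hu : Integrable u μ) (hv : Integrable v μ)
    (hw : Integrable w ν) :
    ∫ p : X × Y, u p.1 + v p.1 * w p.2 ∂μ.prod ν = ∫ x, u x + v x * ∫ y, w y ∂ν ∂μ := by
  rw [integral_add (hu.comp_fst ν) (hv.mul_prod hw), integral_fun_fst, integral_prod_mul,
    integral_add hu (hv.mul_const _), integral_mul_const]
  simp

end MeasureTheory

theorem sconf_population_unbiased_general
    {X : Type*} [MeasurableSpace X] (μ : Measure X) [IsProbabilityMeasure μ]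
    (η : X → ℝ) (hη : Measurable η) (hη0 : ∀ x, 0 ≤ η x) (hη1 : ∀ x, η x ≤ 1)
    (πp πm : ℝ) (hπp : πp = ∫ x, η x ∂μ) (hπm : πm = 1 - πp) (hne : πp ≠ πm)
    (s : X → X → ℝ)
    (hs : ∀ x x', s x x' = η x * η x' + (1 - η x) * (1 - η x'))
    (Cℓ : ℝ)
    (ℓp ℓm : X → ℝ) (hℓp : Measurable ℓp) (hℓm : Measurable ℓm)
    (hℓp0 : ∀ x, 0 ≤ ℓp x) (hℓpC : ∀ x, ℓp x ≤ Cℓ)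
    (hℓm0 : ∀ x, 0 ≤ ℓm x) (hℓmC : ∀ x, ℓm x ≤ Cℓ)
    (R : ℝ) (hR : R = ∫ x, (η x * ℓp x + (1 - η x) * ℓm x) ∂μ) :
    ∫ p : X × X, (1 / 2) *
      ((πm - s p.1 p.2) * (ℓp p.1 + ℓp p.2) / (πm - πp)
        + (πp - s p.1 p.2) * (ℓm p.1 + ℓm p.2) / (πp - πm)) ∂(μ.prod μ) = R := by
  have hd : πm - πp ≠ 0 := sub_ne_zero.mpr hne.symm
  have hIη : Integrable η μ :=
    .of_mem_Icc 0 1 hη.aemeasurable (ae_of_all _ fun x => ⟨hη0 x, hη1 x⟩)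
  have hIℓp : Integrable ℓp μ :=
    .of_mem_Icc 0 Cℓ hℓp.aemeasurable (ae_of_all _ fun x => ⟨hℓp0 x, hℓpC x⟩)
  have hIℓm : Integrable ℓm μ :=
    .of_mem_Icc 0 Cℓ hℓm.aemeasurable (ae_of_all _ fun x => ⟨hℓm0 x, hℓmC x⟩)
  -- `s x x' = (1 - η x) + (2 η x - 1) η x'`, so the loss of the ordered pair is affine in `η x'`.
  set u : X → ℝ := fun x => ((η x - πp) * ℓp x - (η x - πm) * ℓm x) / (πm - πp)
  set v : X → ℝ := fun x => (1 - 2 * η x) * (ℓp x - ℓm x) / (πm - πp)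
  have hu : Integrable u μ :=
    ((hIℓp.mul_of_mem_Icc_left (a := -πp) (b := 1 - πp) (by fun_prop)
      fun x => ⟨by linarith [hη0 x], by linarith [hη1 x]⟩).sub
    (hIℓm.mul_of_mem_Icc_left (a := -πm) (b := 1 - πm) (by fun_prop)
      fun x => ⟨by linarith [hη0 x], by linarith [hη1 x]⟩)).div_const _
  have hv : Integrable v μ :=
    ((hIℓp.sub hIℓm).mul_of_mem_Icc_left (a := -1) (b := 1) (by fun_prop)
      fun x => ⟨by linarith [hη1 x], by linarith [hη0 x]⟩).div_const _
  have hpair : ∀ p : X × X, (1 / 2) *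
      ((πm - s p.1 p.2) * (ℓp p.1 + ℓp p.2) / (πm - πp)
        + (πp - s p.1 p.2) * (ℓm p.1 + ℓm p.2) / (πp - πm)) =
      ((u p.1 + v p.1 * η p.2) + (u p.swap.1 + v p.swap.1 * η p.swap.2)) / 2 := by
    intro p
    have hd' : πp - πm ≠ 0 := sub_ne_zero.mpr hne
    simp only [hs, u, v, Prod.fst_swap, Prod.snd_swap]
    rw [hπm] at hd hd' ⊢
    field_simp
    ring
  simp_rw [hpair]
  rw [integral_prod_add_swap_div_two (hu.prod_add_mul hv hIη), integral_prod_add_mul hu hv hIη,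
    ← hπp, hR]
  congr 1 with x
  simp only [u, v]
  rw [hπm] at hd ⊢
  field_simp
  ring

/-- (Population unbiasedness of the Sconf risk, Eq. (3).) -/
theorem sconf_population_unbiased
    {X : Type*} [MeasurableSpace X] (μ : Measure X) [IsProbabilityMeasure μ]
    (η : X → ℝ) (hη : Measurable η) (hη0 : ∀ x, 0 ≤ η x) (hη1 : ∀ x, η x ≤ 1)
    (πp πm : ℝ) (hπp : πp = ∫ x, η x ∂μ) (hπm : πm = 1 - πp) (hne : πp ≠ πm)
    (s : X → X → ℝ)
    (hs : ∀ x x', s x x' = η x * η x' + (1 - η x) * (1 - η x'))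
    (Cℓ : ℝ) (hCℓ : 0 ≤ Cℓ)
    (ℓp ℓm : X → ℝ) (hℓp : Measurable ℓp) (hℓm : Measurable ℓm)
    (hℓp0 : ∀ x, 0 ≤ ℓp x) (hℓpC : ∀ x, ℓp x ≤ Cℓ)
    (hℓm0 : ∀ x, 0 ≤ ℓm x) (hℓmC : ∀ x, ℓm x ≤ Cℓ)
    (R : ℝ) (hR : R = ∫ x, (η x * ℓp x + (1 - η x) * ℓm x) ∂μ) :
    ∫ p : X × X, (1 / 2) *
      ((πm - s p.1 p.2) * (ℓp p.1 + ℓp p.2) / (πm - πp)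
        + (πp - s p.1 p.2) * (ℓm p.1 + ℓm p.2) / (πp - πm)) ∂(μ.prod μ) = R :=
  sconf_population_unbiased_general μ η hη hη0 hη1 πp πm hπp hπm hne s hs Cℓ ℓp ℓm hℓp hℓm hℓp0 hℓpC
    hℓm0 hℓmC R hR
end

section
/- (McDiarmid-type concentration for a component of the empirical risk, from the proof of Lemma A.6.) Assume C_ℓ > 0 and let a ≥ 0. Then ν{ D ∈ (X×X)^n : ∫ Â dν − Â(D) ≥ a } ≤ exp(−4a²n/((4π₊+1)²C_ℓ²)). -/
/-!
Â(D) is `1/(2n)` times a sum of `n` i.i.d. copies of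
`f(x, x') = (2π₊(π₊ - c(x, x')) + π₋ - s(x, x')) ℓ₊(x)`. Since `π₊ ∈ [0, 1]`, `c ∈ [-1, 1]`,
`s ∈ [0, 1]` and `ℓ₊ ∈ [0, C_ℓ]`, `f` takes values in an interval of length `(4π₊ + 1) C_ℓ`,
so Hoeffding's inequality for the centred sum gives the bound.
-/

open MeasureTheory ProbabilityTheory Real

theorem measureReal_sum_integral_sub_ge_le {Ω ι : Type*} [MeasurableSpace Ω] [Fintype ι]
    (P : Measure Ω) [IsProbabilityMeasure P] {f : Ω → ℝ} (hf : Measurable f) {lo hi : ℝ}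
    (hfb : ∀ ω, f ω ∈ Set.Icc lo hi) {ε : ℝ} (hε : 0 ≤ ε) :
    (Measure.pi fun _ : ι => P).real {D | ε ≤ ∑ i, (∫ ω, f ω ∂P - f (D i))}
      ≤ exp (-2 * ε ^ 2 / (Fintype.card ι * (hi - lo) ^ 2)) := by
  have h_indep : iIndepFun (fun i (D : ι → Ω) => ∫ ω, f ω ∂P - f (D i))
      (Measure.pi fun _ => P) :=
    iIndepFun_pi fun _ => (measurable_const.sub hf).aemeasurable
  have h_subG : ∀ i, HasSubgaussianMGF (fun D : ι → Ω => ∫ ω, f ω ∂P - f (D i))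
      ((‖hi - lo‖₊ / 2) ^ 2) (Measure.pi fun _ => P) := by
    intro i
    have hfi : Measurable fun D : ι → Ω => f (D i) := hf.comp (measurable_pi_apply i)
    refine (hasSubgaussianMGF_of_mem_Icc hfi.aemeasurable (ae_of_all _ fun D => hfb (D i))).neg
      |>.congr (ae_of_all _ fun D => ?_)
    simp [integral_comp_eval (μ := fun _ => P) hf.aestronglyMeasurable]
  refine (HasSubgaussianMGF.measure_sum_ge_le_of_iIndepFun h_indep (fun i _ => h_subG i) hε)
    |>.trans_eq ?_
  congr 1
  simp only [Finset.sum_const, Finset.card_univ, nsmul_eq_mul]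
  push_cast
  rw [Real.norm_eq_abs, div_pow, sq_abs]
  generalize (hi - lo) ^ 2 = w
  ring

theorem integral_sum_comp_eval_pi {Ω ι : Type*} [MeasurableSpace Ω] [Fintype ι]
    (P : Measure Ω) [IsProbabilityMeasure P] {f : Ω → ℝ} (hf : Integrable f P) :
    ∫ D, ∑ i, f (D i) ∂(Measure.pi fun _ : ι => P) = Fintype.card ι * ∫ ω, f ω ∂P := by
  rw [integral_finsetSum _ fun _ _ => integrable_comp_eval (μ := fun _ => P) hf]
  simp [integral_comp_eval (μ := fun _ => P) hf.aestronglyMeasurable]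

lemma mul_mem_Icc_of_mem_Icc_of_nonpos_of_nonneg {T lo hi ℓ C : ℝ} (hT : T ∈ Set.Icc lo hi)
    (hlo : lo ≤ 0) (hhi : 0 ≤ hi) (hℓ : ℓ ∈ Set.Icc 0 C) : T * ℓ ∈ Set.Icc (lo * C) (hi * C) :=
  ⟨by nlinarith [hT.1, hℓ.1, hℓ.2], by nlinarith [hT.2, hℓ.1, hℓ.2]⟩

lemma mul_add_one_sub_mul_one_sub_mem_Icc {u v : ℝ} (hu : u ∈ Set.Icc 0 1)
    (hv : v ∈ Set.Icc 0 1) : u * v + (1 - u) * (1 - v) ∈ Set.Icc 0 1 :=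
  ⟨by nlinarith [hu.1, hu.2, hv.1, hv.2], by nlinarith [hu.1, hu.2, hv.1, hv.2]⟩

def plusLossWeight (p c s : ℝ) : ℝ := 2 * p * (p - c) + (1 - p) - s

lemma plusLossWeight_mem_Icc {p c s : ℝ} (hp : 0 ≤ p) (hc : c ∈ Set.Icc (-1) 1)
    (hs : s ∈ Set.Icc 0 1) :
    plusLossWeight p c s ∈ Set.Icc (2 * p ^ 2 - 3 * p) (2 * p ^ 2 + p + 1) := by
  unfold plusLossWeight
  exact ⟨by nlinarith [mul_le_mul_of_nonneg_left hc.2 hp, hs.2],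
    by nlinarith [mul_le_mul_of_nonneg_left hc.1 hp, hs.1]⟩

lemma plusLossWeight_mul_mem_Icc {p u v ℓ C : ℝ} (hp : p ∈ Set.Icc 0 1) (hu : u ∈ Set.Icc 0 1)
    (hv : v ∈ Set.Icc 0 1) (hℓ : ℓ ∈ Set.Icc 0 C) :
    plusLossWeight p (v - u) (u * v + (1 - u) * (1 - v)) * ℓ
      ∈ Set.Icc ((2 * p ^ 2 - 3 * p) * C) ((2 * p ^ 2 + p + 1) * C) :=
  mul_mem_Icc_of_mem_Icc_of_nonpos_of_nonneg
    (plusLossWeight_mem_Icc hp.1 ⟨by linarith [hu.2, hv.1], by linarith [hu.1, hv.2]⟩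
      (mul_add_one_sub_mul_one_sub_mem_Icc hu hv))
    (by nlinarith [hp.1, hp.2]) (by nlinarith [hp.1]) hℓ

theorem sconfconfdiff_mcdiarmid_component_general
    {X : Type*} [MeasurableSpace X] (μ : Measure X) [IsProbabilityMeasure μ]
    (η : X → ℝ) (hη : Measurable η) (hη0 : ∀ x, 0 ≤ η x) (hη1 : ∀ x, η x ≤ 1)
    (πp πm : ℝ) (hπp : πp = ∫ x, η x ∂μ) (hπm : πm = 1 - πp)
    (s c : X → X → ℝ)
    (hs : ∀ x x', s x x' = η x * η x' + (1 - η x) * (1 - η x'))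
    (hc : ∀ x x', c x x' = η x' - η x)
    (Cℓ : ℝ)
    (ℓp : X → ℝ) (hℓp : Measurable ℓp)
    (hℓp0 : ∀ x, 0 ≤ ℓp x) (hℓpC : ∀ x, ℓp x ≤ Cℓ)
    (n : ℕ) (hn : 1 ≤ n)
    (ν : Measure (Fin n → X × X)) (hν : ν = Measure.pi fun _ => μ.prod μ)
    (Ahat : (Fin n → X × X) → ℝ)
    (hAhat : ∀ D, Ahat D = (1 / (2 * (n : ℝ))) * ∑ i,
      (2 * πp * (πp - c (D i).1 (D i).2) + πm - s (D i).1 (D i).2) * ℓp (D i).1)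
    (a : ℝ) (ha : 0 ≤ a) :
    ν {D | (∫ D', Ahat D' ∂ν) - Ahat D ≥ a}
      ≤ ENNReal.ofReal (exp (-(4 * a ^ 2 * n) / ((4 * πp + 1) ^ 2 * Cℓ ^ 2))) := by
  subst hν hπm
  have hηI : ∀ x, η x ∈ Set.Icc 0 1 := fun x => ⟨hη0 x, hη1 x⟩
  have hπ : πp ∈ Set.Icc 0 1 := hπp ▸ (convex_Icc 0 1).integral_mem isClosed_Icc
    (ae_of_all _ hηI) (Integrable.of_mem_Icc 0 1 hη.aemeasurable (ae_of_all _ hηI))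
  set f : X × X → ℝ := fun z => plusLossWeight πp (c z.1 z.2) (s z.1 z.2) * ℓp z.1 with hf_def
  have hf_meas : Measurable f := by
    simp only [hf_def, plusLossWeight, hs, hc]
    fun_prop
  have hf_mem : ∀ z, f z ∈ Set.Icc ((2 * πp ^ 2 - 3 * πp) * Cℓ) ((2 * πp ^ 2 + πp + 1) * Cℓ) :=
    fun z => by
      simpa only [f, hs, hc] using
        plusLossWeight_mul_mem_Icc hπ (hηI z.1) (hηI z.2) ⟨hℓp0 z.1, hℓpC z.1⟩
  have hAhat_f : ∀ D, Ahat D = (1 / (2 * (n : ℝ))) * ∑ i, f (D i) := hAhat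
  have hf_int : Integrable f (μ.prod μ) :=
    Integrable.of_mem_Icc _ _ hf_meas.aemeasurable (ae_of_all _ hf_mem)
  have h_integral : ∫ D, Ahat D ∂(Measure.pi fun _ => μ.prod μ)
      = (1 / (2 * (n : ℝ))) * (n * ∫ z, f z ∂(μ.prod μ)) := by
    rw [integral_congr_ae (ae_of_all _ hAhat_f), integral_const_mul,
      integral_sum_comp_eval_pi _ hf_int, Fintype.card_fin]
  have hn_pos : (0 : ℝ) < 2 * n := mul_pos two_pos (Nat.cast_pos.2 hn)
  have h_event : {D | (∫ D', Ahat D' ∂(Measure.pi fun _ => μ.prod μ)) - Ahat D ≥ a}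
      = {D | 2 * n * a ≤ ∑ i, (∫ z, f z ∂(μ.prod μ) - f (D i))} := by
    ext D
    rw [Set.mem_ofPred_eq, Set.mem_ofPred_eq, ge_iff_le, ← le_div_iff₀' hn_pos, h_integral,
      hAhat_f, Finset.sum_sub_distrib, Finset.sum_const, Finset.card_univ, Fintype.card_fin,
      nsmul_eq_mul]
    ring_nf
  have h_hoeffding := measureReal_sum_integral_sub_ge_le (ι := Fin n) (μ.prod μ) hf_meas hf_mem
    (ε := 2 * n * a) (by positivity)
  rw [h_event, ← ofReal_measureReal]
  refine ENNReal.ofReal_le_ofReal (h_hoeffding.trans (exp_le_exp.2 ?_))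
  rw [Fintype.card_fin, show (2 * πp ^ 2 + πp + 1) * Cℓ - (2 * πp ^ 2 - 3 * πp) * Cℓ
    = (4 * πp + 1) * Cℓ by ring]
  -- Hoeffding's exponent is twice the one claimed.
  calc -2 * (2 * n * a) ^ 2 / (n * ((4 * πp + 1) * Cℓ) ^ 2)
      = -(8 * a ^ 2 * n) / ((4 * πp + 1) ^ 2 * Cℓ ^ 2) := by
        field_simp
        ring
    _ ≤ -(4 * a ^ 2 * n) / ((4 * πp + 1) ^ 2 * Cℓ ^ 2) := by
        gcongr
        norm_num

/-- (McDiarmid-type concentration for a component of the empirical risk, from the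
proof of Lemma A.6.) -/
theorem sconfconfdiff_mcdiarmid_component
    {X : Type*} [MeasurableSpace X] (μ : Measure X) [IsProbabilityMeasure μ]
    (η : X → ℝ) (hη : Measurable η) (hη0 : ∀ x, 0 ≤ η x) (hη1 : ∀ x, η x ≤ 1)
    (πp πm : ℝ) (hπp : πp = ∫ x, η x ∂μ) (hπm : πm = 1 - πp)
    (s c : X → X → ℝ)
    (hs : ∀ x x', s x x' = η x * η x' + (1 - η x) * (1 - η x'))
    (hc : ∀ x x', c x x' = η x' - η x)
    (Cℓ : ℝ) (hCℓ : 0 < Cℓ)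
    (ℓp : X → ℝ) (hℓp : Measurable ℓp)
    (hℓp0 : ∀ x, 0 ≤ ℓp x) (hℓpC : ∀ x, ℓp x ≤ Cℓ)
    (n : ℕ) (hn : 1 ≤ n)
    (ν : Measure (Fin n → X × X)) (hν : ν = Measure.pi fun _ => μ.prod μ)
    (Ahat : (Fin n → X × X) → ℝ)
    (hAhat : ∀ D, Ahat D = (1 / (2 * (n : ℝ))) * ∑ i,
      (2 * πp * (πp - c (D i).1 (D i).2) + πm - s (D i).1 (D i).2) * ℓp (D i).1)
    (a : ℝ) (ha : 0 ≤ a) :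
    ν {D | (∫ D', Ahat D' ∂ν) - Ahat D ≥ a}
      ≤ ENNReal.ofReal (exp (-(4 * a ^ 2 * n) / ((4 * πp + 1) ^ 2 * Cℓ ^ 2))) :=
  sconfconfdiff_mcdiarmid_component_general μ η hη hη0 hη1 πp πm hπp hπm s c hs hc Cℓ ℓp hℓp hℓp0
    hℓpC n hn ν hν Ahat hAhat a ha
end
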